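/- arXiv:2308.04860 — 11 statements merged into one kernel-verified Lean document; each statement's English description precedes it below -/
import Mathlib

section
/- For any number n ≥ 1 of agents with monotone, nonnegative valuation functions (with v_i(∅) = 0) over a finite set M of indivisible items, there exists a complete allocation of M that is EF1 (envy-free up to one good). -/
/-!
Envy-cycle elimination (Lipton, Markakis, Mossel and Saberi). Items are added one at a time to an
EF1 allocation. Before an item is added, bundles are permuted along envy cycles: every agent on a
cycle receives the bundle it envies, so nobody loses and total welfare strictly increases. Hence a
welfare-maximal such permutation leaves some agent unenvied, and that agent receives the new item;
removing that item is then enough to cancel any envy towards its bundle.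
-/

open Function Equiv

theorem Function.periodicPts_nonempty {α : Type*} [Finite α] [Nonempty α] (f : α → α) :
    (periodicPts f).Nonempty := by
  obtain ⟨x⟩ := ‹Nonempty α›
  obtain ⟨m, n, heq, hlt⟩ : ∃ m n, f^[m] x = f^[n] x ∧ m < n := by
    obtain ⟨m, n, heq, hne⟩ : ∃ m n, f^[m] x = f^[n] x ∧ m ≠ n := by
      simpa [Injective] using not_injective_infinite_finite (f^[·] x)
    rcases hne.lt_or_gt with h | h
    exacts [⟨m, n, heq, h⟩, ⟨n, m, heq.symm, h⟩]
  refine ⟨f^[m] x, mk_mem_periodicPts (Nat.sub_pos_of_lt hlt) ?_⟩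
  rw [IsPeriodicPt, IsFixedPt, ← iterate_add_apply, Nat.sub_add_cancel hlt.le, heq]

theorem Equiv.Perm.exists_eq_or_eq_apply {α : Type*} [Finite α] [Nonempty α] (f : α → α) :
    ∃ σ : Perm α, (∃ x, σ x = f x) ∧ ∀ x, σ x = x ∨ σ x = f x := by
  classical
  let σ : Perm α := Perm.ofSubtype ((bijOn_periodicPts f).equiv f)
  have hσ : ∀ x ∈ periodicPts f, σ x = f x := fun x hx => Perm.ofSubtype_apply_of_mem _ hx
  obtain ⟨x₀, hx₀⟩ := periodicPts_nonempty f
  refine ⟨σ, ⟨x₀, hσ x₀ hx₀⟩, fun x => ?_⟩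
  by_cases hx : x ∈ periodicPts f
  · exact Or.inr (hσ x hx)
  · exact Or.inl (Perm.ofSubtype_apply_of_not_mem _ hx)

section FairDivision

variable {α ι β : Type*} [LinearOrder β]

def IsAllocation (A : α → Finset ι) (S : Finset ι) : Prop :=
  (∀ i, A i ⊆ S) ∧ (∀ g ∈ S, ∃ i, g ∈ A i) ∧ Pairwise (Disjoint on A)

def Envies (v : α → Finset ι → β) (A : α → Finset ι) (i j : α) : Prop :=
  v i (A i) < v i (A j)

def IsEF1 [DecidableEq ι] (v : α → Finset ι → β) (A : α → Finset ι) : Prop :=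
  ∀ i j, (A j).Nonempty → ∃ g ∈ A j, v i ((A j).erase g) ≤ v i (A i)

theorem exists_perm_improving_of_forall_envied [Finite α] [Nonempty α]
    {v : α → Finset ι → β} {A : α → Finset ι} (h : ∀ j, ∃ i, Envies v A i j) :
    ∃ τ : Perm α, (∀ i, v i (A i) ≤ v i (A (τ i))) ∧ ∃ i, v i (A i) < v i (A (τ i)) := by
  choose f hf using h
  obtain ⟨σ, ⟨x₀, hx₀⟩, hσ⟩ := Perm.exists_eq_or_eq_apply f
  refine ⟨σ.symm, fun i => ?_, σ x₀, ?_⟩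
  · obtain ⟨j, rfl⟩ := σ.surjective i
    rw [Equiv.symm_apply_apply]
    rcases hσ j with hj | hj <;> rw [hj]
    exact (hf j).le
  · rw [Equiv.symm_apply_apply, hx₀]
    exact hf x₀

theorem exists_perm_improving_unenvied [AddCommMonoid β] [IsOrderedCancelAddMonoid β]
    [Fintype α] [Nonempty α] (v : α → Finset ι → β) (A : α → Finset ι) :
    ∃ σ : Perm α, (∀ i, v i (A i) ≤ v i (A (σ i))) ∧ ∃ i₀, ∀ j, ¬ Envies v (A ∘ σ) j i₀ := by
  classical
  obtain ⟨σ, hσ, hmax⟩ := Finset.exists_max_image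
    {σ : Perm α | ∀ i, v i (A i) ≤ v i (A (σ i))} (fun σ => ∑ i, v i (A (σ i)))
    ⟨1, by simp⟩
  rw [Finset.mem_filter_univ] at hσ
  refine ⟨σ, hσ, ?_⟩
  by_contra! hall
  obtain ⟨τ, hτ, i, hi⟩ := exists_perm_improving_of_forall_envied hall
  have hστ : ∀ i, v i (A i) ≤ v i (A ((σ * τ) i)) := fun i => (hσ i).trans (hτ i)
  have hlt : ∑ i, v i (A (σ i)) < ∑ i, v i (A ((σ * τ) i)) :=
    Finset.sum_lt_sum (fun i _ => hτ i) ⟨i, Finset.mem_univ _, hi⟩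
  exact (hmax (σ * τ) ((Finset.mem_filter_univ _).mpr hστ)).not_gt hlt

theorem IsAllocation.comp_perm {A : α → Finset ι} {S : Finset ι} (hA : IsAllocation A S)
    (σ : Perm α) : IsAllocation (A ∘ σ) S := by
  obtain ⟨hsub, hcov, hdisj⟩ := hA
  refine ⟨fun i => hsub (σ i), fun g hg => ?_, fun i j hij => hdisj (σ.injective.ne hij)⟩
  obtain ⟨i, hi⟩ := hcov g hg
  exact ⟨σ.symm i, by simpa using hi⟩

theorem IsEF1.comp_of_le [DecidableEq ι] {v : α → Finset ι → β} {A : α → Finset ι}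
    (hA : IsEF1 v A) {σ : α → α} (hσ : ∀ i, v i (A i) ≤ v i (A (σ i))) : IsEF1 v (A ∘ σ) := by
  intro i j hj
  obtain ⟨g, hg, hle⟩ := hA i (σ j) hj
  exact ⟨g, hg, hle.trans (hσ i)⟩

theorem IsAllocation.update_insert [DecidableEq α] [DecidableEq ι] {A : α → Finset ι}
    {S : Finset ι} (hA : IsAllocation A S) {x : ι} (hx : x ∉ S) (i₀ : α) :
    IsAllocation (update A i₀ (insert x (A i₀))) (insert x S) := by
  obtain ⟨hsub, hcov, hdisj⟩ := hA
  refine ⟨fun i => ?_, fun g hg => ?_, fun i j hij => ?_⟩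
  · rcases eq_or_ne i i₀ with rfl | hi
    · simpa using Finset.insert_subset_insert x (hsub i)
    · simpa [hi] using (hsub i).trans (Finset.subset_insert x S)
  · rcases Finset.mem_insert.mp hg with rfl | hg
    · exact ⟨i₀, by simp⟩
    · obtain ⟨i, hi⟩ := hcov g hg
      refine ⟨i, ?_⟩
      rcases eq_or_ne i i₀ with rfl | hi₀ <;> simp_all
  · have hxA : ∀ k, x ∉ A k := fun k hk => hx (hsub k hk)
    rcases eq_or_ne i i₀ with rfl | hi
    · simpa [onFun, hij.symm, hxA j] using hdisj hij
    · rcases eq_or_ne j i₀ with rfl | hj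
      · simpa [onFun, hi, hxA i] using hdisj hij
      · simpa [onFun, hi, hj] using hdisj hij

theorem IsEF1.update_insert [DecidableEq α] [DecidableEq ι] {v : α → Finset ι → β}
    {A : α → Finset ι} (hA : IsEF1 v A) {i₀ : α} (hi₀ : ∀ j, ¬ Envies v A j i₀) {x : ι}
    (hx : x ∉ A i₀) (hmono : v i₀ (A i₀) ≤ v i₀ (insert x (A i₀))) :
    IsEF1 v (update A i₀ (insert x (A i₀))) := by
  have hle : ∀ i, v i (A i) ≤ v i (update A i₀ (insert x (A i₀)) i) := fun i => by
    rcases eq_or_ne i i₀ with rfl | hi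
    · simpa using hmono
    · simp [hi]
  intro i j hj
  rcases eq_or_ne j i₀ with rfl | hj₀
  · refine ⟨x, by simp, ?_⟩
    rw [update_self, Finset.erase_insert hx]
    exact (not_lt.mp (hi₀ i)).trans (hle i)
  · rw [update_of_ne hj₀] at hj ⊢
    obtain ⟨g, hg, hvg⟩ := hA i j hj
    exact ⟨g, hg, hvg.trans (hle i)⟩

theorem IsEF1.exists_insert [AddCommMonoid β] [IsOrderedCancelAddMonoid β] [Fintype α]
    [Nonempty α] [DecidableEq ι] {v : α → Finset ι → β}
    {A : α → Finset ι} {S : Finset ι} (hA : IsAllocation A S) (hEF1 : IsEF1 v A) {x : ι}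
    (hx : x ∉ S) (hmono : ∀ i, ∀ T ⊆ S, v i T ≤ v i (insert x T)) :
    ∃ A', IsAllocation A' (insert x S) ∧ IsEF1 v A' := by
  classical
  obtain ⟨σ, hσ, i₀, hi₀⟩ := exists_perm_improving_unenvied v A
  have hB := hA.comp_perm σ
  exact ⟨_, hB.update_insert hx i₀, (hEF1.comp_of_le hσ).update_insert hi₀
    (fun h => hx (hB.1 i₀ h)) (hmono i₀ _ (hB.1 i₀))⟩

theorem exists_isAllocation_isEF1 [AddCommMonoid β] [IsOrderedCancelAddMonoid β] [Fintype α]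
    [Nonempty α] [DecidableEq ι]
    (v : α → Finset ι → β) (S : Finset ι)
    (hmono : ∀ i, ∀ T U : Finset ι, T ⊆ U → U ⊆ S → v i T ≤ v i U) :
    ∃ A, IsAllocation A S ∧ IsEF1 v A := by
  induction S using Finset.induction_on with
  | empty => exact ⟨fun _ => ∅, ⟨fun _ => le_rfl, by simp, fun _ _ _ => by simp⟩, by simp [IsEF1]⟩
  | insert x S hx ih =>
    obtain ⟨A, hA, hEF1⟩ := ih fun i T U hTU hU =>
      hmono i T U hTU (hU.trans (Finset.subset_insert _ _))
    exact hEF1.exists_insert hA hx fun i T hT =>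
      hmono i T _ (Finset.subset_insert _ _) (Finset.insert_subset_insert _ hT)

end FairDivision

theorem ef1_exists_general {ι : Type*} [DecidableEq ι] (n : ℕ) (hn : 1 ≤ n)
    (M : Finset ι) (v : Fin n → Finset ι → ℝ)
    (hmono : ∀ i, ∀ S T : Finset ι, S ⊆ T → T ⊆ M → v i S ≤ v i T) :
    ∃ A : Fin n → Finset ι,
      (∀ i, A i ⊆ M) ∧
      (∀ g ∈ M, ∃ i, g ∈ A i) ∧
      (∀ i j, i ≠ j → Disjoint (A i) (A j)) ∧
      (∀ i j, ((A j).Nonempty → ∃ g ∈ A j, v i ((A j).erase g) ≤ v i (A i)) ∧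
        (A j = ∅ → v i (A j) ≤ v i (A i))) := by
  have : Nonempty (Fin n) := ⟨⟨0, hn⟩⟩
  obtain ⟨A, ⟨hsub, hcov, hdisj⟩, hEF1⟩ := exists_isAllocation_isEF1 v M hmono
  refine ⟨A, hsub, hcov, fun i j hij => hdisj hij, fun i j => ⟨hEF1 i j, fun hj => ?_⟩⟩
  exact hmono i _ _ (hj ▸ Finset.empty_subset _) (hsub i)

/-- For any number `n ≥ 1` of agents with monotone, nonnegative valuation functions
(with `v i ∅ = 0`) over a finite set `M` of indivisible items, there exists a complete
allocation of `M` that is EF1. -/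
theorem ef1_exists {ι : Type*} [DecidableEq ι] (n : ℕ) (hn : 1 ≤ n)
    (M : Finset ι) (v : Fin n → Finset ι → ℝ)
    (hmono : ∀ i, ∀ S T : Finset ι, S ⊆ T → T ⊆ M → v i S ≤ v i T)
    (hnonneg : ∀ i, ∀ S : Finset ι, S ⊆ M → 0 ≤ v i S)
    (hempty : ∀ i, v i ∅ = 0) :
    ∃ A : Fin n → Finset ι,
      (∀ i, A i ⊆ M) ∧
      (∀ g ∈ M, ∃ i, g ∈ A i) ∧
      (∀ i j, i ≠ j → Disjoint (A i) (A j)) ∧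
      (∀ i j, ((A j).Nonempty → ∃ g ∈ A j, v i ((A j).erase g) ≤ v i (A i)) ∧
        (A j = ∅ → v i (A j) ≤ v i (A i))) :=
  ef1_exists_general n hn M v hmono
end

section
/- For any number n ≥ 1 of agents with additive valuations over a finite set M of indivisible items, there exists a complete allocation of M that is simultaneously 1/2-EFX and EF1. -/
/-!
Allocate the items one at a time, keeping a partial allocation that is 1/2-EFX and EF1 and in
which every agent with a nonempty bundle values each unallocated item at most as much as its
bundle. While some bundle is empty, its owner takes its favourite unallocated item. Afterwards,
the bundles are first permuted, without making anybody worse off, so that some bundle `B` is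
envied by nobody (envy-cycle elimination), and an arbitrary unallocated item `g` is added to `B`.
Removing `g` from `B ∪ {g}` leaves `B`, which every agent `i` values at most `v i (A i)`;
removing any other item leaves at most `v i B + v i g ≤ 2 v i (A i)`.
-/

open Finset Function

theorem Function.exists_mem_periodicPts {α : Type*} [Finite α] [Nonempty α] (f : α → α) :
    ∃ x, x ∈ periodicPts f := by
  obtain ⟨x⟩ := ‹Nonempty α›
  obtain ⟨m, n, heq, hlt⟩ : ∃ m n, f^[m] x = f^[n] x ∧ m < n := by
    obtain ⟨m, n, heq, hne⟩ : ∃ m n, f^[m] x = f^[n] x ∧ m ≠ n := by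
      simpa [Injective] using not_injective_infinite_finite (f^[·] x)
    rcases hne.lt_or_gt with h | h
    exacts [⟨m, n, heq, h⟩, ⟨n, m, heq.symm, h⟩]
  refine ⟨f^[m] x, mk_mem_periodicPts (n := n - m) (by omega) ?_⟩
  rw [IsPeriodicPt, IsFixedPt, ← iterate_add_apply, Nat.sub_add_cancel hlt.le, heq]

theorem exists_perm_improving_with_source {κ : Type*} [Finite κ] [Nonempty κ]
    (u : κ → κ → ℝ) :
    ∃ σ : Equiv.Perm κ, (∀ k, u k k ≤ u k (σ k)) ∧ ∃ s, ∀ k, u k (σ s) ≤ u k (σ k) := by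
  classical
  have := Fintype.ofFinite κ
  obtain ⟨σ, hσ, hσmax⟩ := exists_max_image
    (univ.filter fun σ : Equiv.Perm κ => ∀ k, u k k ≤ u k (σ k)) (fun σ => ∑ k, u k (σ k))
    ⟨1, by simp⟩
  rw [mem_filter_univ] at hσ
  refine ⟨σ, hσ, ?_⟩
  -- Otherwise every bundle `σ s` is strictly envied by some agent `F s`; on the periodic points
  -- of `F`, where `F` is bijective, handing each bundle to its envier raises the total value.
  by_contra! henvied
  choose F hF using henvied
  obtain ⟨p, hp⟩ := exists_mem_periodicPts F
  have hbij := bijOn_periodicPts F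
  set τ := Equiv.Perm.ofSubtype (hbij.equiv F)
  have hmoved : ∀ k ∈ periodicPts F, u k (σ k) < u k ((σ * τ⁻¹) k) := by
    intro k hk
    obtain ⟨a, ha, rfl⟩ := hbij.surjOn hk
    have hτa : τ a = F a := Equiv.Perm.ofSubtype_apply_of_mem _ ha
    rw [Equiv.Perm.mul_apply, Equiv.Perm.inv_eq_iff_eq.mpr hτa.symm]
    exact hF a
  have hfixed : ∀ k ∉ periodicPts F, (σ * τ⁻¹) k = σ k := by
    intro k hk
    rw [Equiv.Perm.mul_apply, Equiv.Perm.inv_eq_iff_eq.mpr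
      (Equiv.Perm.ofSubtype_apply_of_not_mem _ hk).symm]
  have hweak : ∀ k, u k (σ k) ≤ u k ((σ * τ⁻¹) k) := by
    intro k
    by_cases hk : k ∈ periodicPts F
    · exact (hmoved k hk).le
    · rw [hfixed k hk]
  have hlt : ∑ k, u k (σ k) < ∑ k, u k ((σ * τ⁻¹) k) :=
    sum_lt_sum (fun k _ => hweak k) ⟨p, mem_univ p, hmoved p hp⟩
  have hle := hσmax (σ * τ⁻¹) ((mem_filter_univ _).mpr fun k => (hσ k).trans (hweak k))
  exact hle.not_gt hlt

theorem half_mul_sum_erase_insert_le {ι : Type*} [DecidableEq ι] {f : ι → ℝ} {B S : Finset ι}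
    {g g' : ι} (hf : ∀ x ∈ insert g B, 0 ≤ f x) (hgB : g ∉ B)
    (hB : ∑ x ∈ B, f x ≤ ∑ x ∈ S, f x) (hg : B.Nonempty → f g ≤ ∑ x ∈ S, f x)
    (hg' : g' ∈ insert g B) :
    (1/2 : ℝ) * ∑ x ∈ (insert g B).erase g', f x ≤ ∑ x ∈ S, f x := by
  rcases mem_insert.mp hg' with rfl | hg'B
  · rw [erase_insert hgB]
    have : 0 ≤ ∑ x ∈ B, f x := sum_nonneg fun x hx => hf x (mem_insert_of_mem hx)
    linarith
  · have hle : ∑ x ∈ (insert g B).erase g', f x ≤ ∑ x ∈ insert g B, f x :=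
      sum_le_sum_of_subset_of_nonneg (erase_subset _ _) fun x hx _ => hf x hx
    rw [sum_insert hgB] at hle
    linarith [hg ⟨g', hg'B⟩]

theorem pairwise_disjoint_update_insert {ι κ : Type*} [DecidableEq ι] [DecidableEq κ]
    {A : κ → Finset ι} (hA : ∀ i j, i ≠ j → Disjoint (A i) (A j)) {g : ι} (hg : ∀ j, g ∉ A j)
    (a : κ) (i j : κ) (hij : i ≠ j) :
    Disjoint (update A a (insert g (A a)) i) (update A a (insert g (A a)) j) := by
  rcases eq_or_ne i a with rfl | hia
  · rw [update_self, update_of_ne hij.symm]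
    exact disjoint_insert_left.mpr ⟨hg j, hA i j hij⟩
  rcases eq_or_ne j a with rfl | hja
  · rw [update_self, update_of_ne hia]
    exact disjoint_insert_right.mpr ⟨hg i, hA i j hij⟩
  rw [update_of_ne hia, update_of_ne hja]
  exact hA i j hij

section GoodPartialAlloc

variable {ι κ : Type*} [DecidableEq ι]

structure IsGoodPartialAlloc (v : κ → ι → ℝ) (M R : Finset ι) (A : κ → Finset ι) : Prop where
  subset : ∀ i, A i ⊆ M
  remaining_subset : R ⊆ M
  pairwise_disjoint : ∀ i j, i ≠ j → Disjoint (A i) (A j)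
  disjoint_remaining : ∀ i, Disjoint (A i) R
  covers : ∀ g ∈ M, g ∉ R → ∃ i, g ∈ A i
  half_efx : ∀ i j, ∀ g ∈ A j, (1/2 : ℝ) * ∑ x ∈ (A j).erase g, v i x ≤ ∑ x ∈ A i, v i x
  ef1 : ∀ i j, (A j).Nonempty → ∃ g ∈ A j, ∑ x ∈ (A j).erase g, v i x ≤ ∑ x ∈ A i, v i x
  remaining_le : ∀ i, (A i).Nonempty → ∀ g ∈ R, v i g ≤ ∑ x ∈ A i, v i x

namespace IsGoodPartialAlloc

variable {v : κ → ι → ℝ} {M R : Finset ι} {A : κ → Finset ι}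

theorem empty (v : κ → ι → ℝ) (M : Finset ι) : IsGoodPartialAlloc v M M fun _ => ∅ where
  subset _ := empty_subset M
  remaining_subset := subset_refl M
  pairwise_disjoint _ _ _ := disjoint_empty_left _
  disjoint_remaining _ := disjoint_empty_left _
  covers _ hg hgM := absurd hg hgM
  half_efx _ _ _ hg := absurd hg (notMem_empty _)
  ef1 _ _ h := absurd h not_nonempty_empty
  remaining_le _ h := absurd h not_nonempty_empty

theorem comp_perm (h : IsGoodPartialAlloc v M R A) (hne : ∀ i, (A i).Nonempty)
    (σ : Equiv.Perm κ) (hσ : ∀ i, ∑ x ∈ A i, v i x ≤ ∑ x ∈ A (σ i), v i x) :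
    IsGoodPartialAlloc v M R (A ∘ σ) where
  subset i := h.subset (σ i)
  remaining_subset := h.remaining_subset
  pairwise_disjoint i j hij := h.pairwise_disjoint _ _ (σ.injective.ne hij)
  disjoint_remaining i := h.disjoint_remaining (σ i)
  covers g hg hgR := by
    obtain ⟨i, hi⟩ := h.covers g hg hgR
    exact ⟨σ.symm i, by simpa using hi⟩
  half_efx i j g hg := (h.half_efx i (σ j) g hg).trans (hσ i)
  ef1 i j hj := by
    obtain ⟨g, hg, hle⟩ := h.ef1 i (σ j) hj
    exact ⟨g, hg, hle.trans (hσ i)⟩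
  remaining_le i _ g hg := (h.remaining_le i (hne i) g hg).trans (hσ i)

theorem insert_of_source [DecidableEq κ] (h : IsGoodPartialAlloc v M R A)
    (hv : ∀ i, ∀ g ∈ M, 0 ≤ v i g) {a : κ} {g : ι} (hg : g ∈ R)
    (hsrc : ∀ i, ∑ x ∈ A a, v i x ≤ ∑ x ∈ A i, v i x)
    (hne : (A a).Nonempty → ∀ i, (A i).Nonempty)
    (hfav : ∀ g' ∈ R.erase g, v a g' ≤ ∑ x ∈ insert g (A a), v a x) :
    IsGoodPartialAlloc v M (R.erase g) (update A a (insert g (A a))) := by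
  set A' := update A a (insert g (A a))
  have hgA : ∀ j, g ∉ A j := fun j hgj => disjoint_left.mp (h.disjoint_remaining j) hgj hg
  have hgM : g ∈ M := h.remaining_subset hg
  have hA'a : A' a = insert g (A a) := update_self ..
  have hA'ne : ∀ j, j ≠ a → A' j = A j := fun j hj => update_of_ne hj ..
  have hA_sub : ∀ j, A j ⊆ A' j := fun j => by
    rcases eq_or_ne j a with rfl | hj
    · exact hA'a ▸ subset_insert g _
    · exact (hA'ne j hj).ge
  have hA'_sub : ∀ j, A' j ⊆ insert g (A j) := fun j => by
    rcases eq_or_ne j a with rfl | hj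
    · exact hA'a.le
    · exact hA'ne j hj ▸ subset_insert g _
  have hsubset : ∀ j, A' j ⊆ M := fun j => (hA'_sub j).trans (insert_subset hgM (h.subset j))
  have hgain : ∀ i, ∑ x ∈ A i, v i x ≤ ∑ x ∈ A' i, v i x := fun i =>
    sum_le_sum_of_subset_of_nonneg (hA_sub i) fun x hx _ => hv i x (hsubset i hx)
  refine ⟨hsubset, (erase_subset g R).trans h.remaining_subset,
    pairwise_disjoint_update_insert h.pairwise_disjoint hgA a, fun j => ?_, ?_, ?_, ?_, ?_⟩
  · refine Disjoint.mono_left (hA'_sub j) (disjoint_insert_left.mpr ⟨notMem_erase g R, ?_⟩)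
    exact (h.disjoint_remaining j).mono_right (erase_subset g R)
  · intro g' hg'M hg'R
    by_cases hg'g : g' = g
    · exact ⟨a, by rw [hA'a, hg'g]; exact mem_insert_self g _⟩
    · obtain ⟨j, hj⟩ := h.covers g' hg'M fun hg'R' => hg'R (mem_erase.mpr ⟨hg'g, hg'R'⟩)
      exact ⟨j, hA_sub j hj⟩
  · intro i j g' hg'
    rcases eq_or_ne j a with rfl | hj
    · rw [hA'a] at hg' ⊢
      refine (half_mul_sum_erase_insert_le (fun x hx => hv i x ?_) (hgA j) (hsrc i)
        (fun hj => h.remaining_le i (hne hj i) g hg) hg').trans (hgain i)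
      exact insert_subset hgM (h.subset j) hx
    · rw [hA'ne j hj] at hg' ⊢
      exact (h.half_efx i j g' hg').trans (hgain i)
  · intro i j hj
    rcases eq_or_ne j a with rfl | hja
    · refine ⟨g, hA'a ▸ mem_insert_self g _, ?_⟩
      rw [hA'a, erase_insert (hgA j)]
      exact (hsrc i).trans (hgain i)
    · rw [hA'ne j hja] at hj ⊢
      obtain ⟨g', hg', hle⟩ := h.ef1 i j hj
      exact ⟨g', hg', hle.trans (hgain i)⟩
  · intro i hi g' hg'
    rcases eq_or_ne i a with rfl | hia
    · exact hA'a ▸ hfav g' hg'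
    · rw [hA'ne i hia] at hi ⊢
      exact h.remaining_le i hi g' (mem_of_mem_erase hg')

variable [DecidableEq κ] [Finite κ] [Nonempty κ]

theorem exists_erase (h : IsGoodPartialAlloc v M R A)
    (hv : ∀ i, ∀ g ∈ M, 0 ≤ v i g) (hR : R.Nonempty) :
    ∃ g ∈ R, ∃ A', IsGoodPartialAlloc v M (R.erase g) A' := by
  by_cases hempty : ∃ a, A a = ∅
  · obtain ⟨a, ha⟩ := hempty
    obtain ⟨g, hg, hgmax⟩ := exists_max_image R (v a) hR
    refine ⟨g, hg, _, h.insert_of_source (a := a) hv hg (fun i => ?_) (by simp [ha])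
      fun g' hg' => ?_⟩
    · rw [ha, sum_empty]
      exact sum_nonneg fun x hx => hv i x (h.subset i hx)
    · simpa [ha] using hgmax g' (mem_of_mem_erase hg')
  · have hne : ∀ i, (A i).Nonempty := fun i =>
      nonempty_iff_ne_empty.mpr fun hi => hempty ⟨i, hi⟩
    obtain ⟨σ, hσ, s, hs⟩ := exists_perm_improving_with_source fun i j => ∑ x ∈ A j, v i x
    obtain ⟨g, hg⟩ := hR
    have hσA := h.comp_perm hne σ hσ
    refine ⟨g, hg, _, hσA.insert_of_source hv hg hs (fun _ i => hne (σ i)) fun g' hg' => ?_⟩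
    refine (hσA.remaining_le s (hne (σ s)) g' (mem_of_mem_erase hg')).trans ?_
    exact sum_le_sum_of_subset_of_nonneg (subset_insert g _) fun x hx _ =>
      hv s x (insert_subset (h.remaining_subset hg) (hσA.subset s) hx)

theorem exists_complete (hv : ∀ i, ∀ g ∈ M, 0 ≤ v i g) :
    ∃ A : κ → Finset ι, IsGoodPartialAlloc v M ∅ A := by
  suffices ∀ R, (∃ A, IsGoodPartialAlloc v M R A) → ∃ A, IsGoodPartialAlloc v M ∅ A from
    this M ⟨_, empty v M⟩
  intro R
  induction R using Finset.strongInduction with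
  | H R ih =>
    rintro ⟨A, hA⟩
    obtain rfl | hR := R.eq_empty_or_nonempty
    · exact ⟨A, hA⟩
    obtain ⟨g, hg, A', hA'⟩ := hA.exists_erase hv hR
    exact ih _ (erase_ssubset hg) ⟨A', hA'⟩

end IsGoodPartialAlloc

end GoodPartialAlloc

/-- For any number `n ≥ 1` of agents with additive valuations over a finite set `M` of
indivisible items, there exists a complete allocation of `M` that is simultaneously
1/2-EFX and EF1. -/
theorem half_efx_and_ef1_exists {ι : Type*} [DecidableEq ι] (n : ℕ) (hn : 1 ≤ n)
    (M : Finset ι) (w : Fin n → ι → ℝ)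
    (hw : ∀ i, ∀ g ∈ M, 0 ≤ w i g) :
    ∃ A : Fin n → Finset ι,
      (∀ i, A i ⊆ M) ∧
      (∀ g ∈ M, ∃ i, g ∈ A i) ∧
      (∀ i j, i ≠ j → Disjoint (A i) (A j)) ∧
      (∀ i j, ∀ g ∈ A j,
        (1/2 : ℝ) * ∑ x ∈ (A j).erase g, w i x ≤ ∑ x ∈ A i, w i x) ∧
      (∀ i j, ((A j).Nonempty →
          ∃ g ∈ A j, ∑ x ∈ (A j).erase g, w i x ≤ ∑ x ∈ A i, w i x) ∧
        (A j = ∅ → ∑ x ∈ A j, w i x ≤ ∑ x ∈ A i, w i x)) := by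
  have : Nonempty (Fin n) := ⟨⟨0, hn⟩⟩
  obtain ⟨A, hA⟩ := IsGoodPartialAlloc.exists_complete hw
  refine ⟨A, hA.subset, fun g hg => hA.covers g hg (notMem_empty g), hA.pairwise_disjoint,
    hA.half_efx, fun i j => ⟨hA.ef1 i j, fun hj => ?_⟩⟩
  rw [hj, sum_empty]
  exact sum_nonneg fun x hx => hw i x (hA.subset i hx)
end

section
/- Let n agents have additive valuations over a finite set M of items, let α ∈ (0,1] and β > 0, and suppose S = (S_1,...,S_n) is a partial allocation of M that is α-EFX and satisfies v_i(S_i) ≥ β·v_i({h}) for every agent i and every item h ∈ M not allocated by S. Then there exists a complete allocation A = (A_1,...,A_n) of M that is min(α, β/(β+1))-EFX and satisfies v_i(A_i) ≥ v_i(S_i) for every agent i. -/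
lemma exists_periodic_pt {n : ℕ} (hn : 0 < n) (f : Fin n → Fin n) :
    ∃ a m, 0 < m ∧ f^[m] a = a := by
  have x : Fin n := ⟨0, hn⟩
  have hni : ¬ Function.Injective (fun t : Fin (n+1) => f^[(t : ℕ)] x) := by
    intro hinj
    have := Fintype.card_le_of_injective _ hinj
    simp at this
  rw [Function.not_injective_iff] at hni
  obtain ⟨s, t, heq, hne⟩ := hni
  rcases lt_or_gt_of_ne (fun h : (s:ℕ) = (t:ℕ) => hne (Fin.ext h)) with hlt | hlt
  · refine ⟨f^[(s:ℕ)] x, (t:ℕ) - (s:ℕ), by omega, ?_⟩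
    rw [← Function.iterate_add_apply]
    rw [Nat.sub_add_cancel hlt.le]
    exact heq.symm
  · refine ⟨f^[(t:ℕ)] x, (s:ℕ) - (t:ℕ), by omega, ?_⟩
    rw [← Function.iterate_add_apply]
    rw [Nat.sub_add_cancel hlt.le]
    exact heq

lemma exists_unenvied_perm {n : ℕ} (hn : 0 < n) (u : Fin n → Fin n → ℝ) :
    ∃ π : Equiv.Perm (Fin n), (∀ i, u i i ≤ u i (π i)) ∧ ∃ k, ∀ j, u j (π k) ≤ u j (π j) := by
  classical
  set P : Finset (Equiv.Perm (Fin n)) :=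
    Finset.univ.filter (fun π : Equiv.Perm (Fin n) => ∀ i, u i i ≤ u i (π i)) with hP
  have hPne : P.Nonempty := ⟨1, by simp [hP]⟩
  obtain ⟨π, hπmem, hπmax⟩ :=
    Finset.exists_max_image P (fun π : Equiv.Perm (Fin n) => ∑ i, u i (π i)) hPne
  have hπfeas : ∀ i, u i i ≤ u i (π i) := (Finset.mem_filter.1 hπmem).2
  refine ⟨π, hπfeas, ?_⟩
  by_contra hc
  push_neg at hc
  choose f hf using hc
  -- f k envies k : u (f k) (π (f k)) < u (f k) (π k)
  obtain ⟨a, m, hm, hma⟩ := exists_periodic_pt hn f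
  set O : Finset (Fin n) := (Finset.range m).image (fun t => f^[t] a) with hO
  have haO : a ∈ O := Finset.mem_image.2 ⟨0, Finset.mem_range.2 hm, rfl⟩
  have hmaps : ∀ x ∈ O, f x ∈ O := by
    intro x hx
    obtain ⟨t, ht, rfl⟩ := Finset.mem_image.1 hx
    rw [Finset.mem_range] at ht
    rcases eq_or_lt_of_le (Nat.succ_le_of_lt ht) with h1 | h1
    · have hfa : f (f^[t] a) = a := by
        rw [← Function.iterate_succ_apply' f t a, h1, hma]
      rw [hfa]; exact haO
    · exact Finset.mem_image.2 ⟨t + 1, Finset.mem_range.2 h1,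
        (Function.iterate_succ_apply' f t a)⟩
  have hsurj : ∀ y ∈ O, ∃ x ∈ O, f x = y := by
    intro y hy
    obtain ⟨t, ht, rfl⟩ := Finset.mem_image.1 hy
    rw [Finset.mem_range] at ht
    rcases Nat.eq_zero_or_pos t with rfl | htp
    · refine ⟨f^[m - 1] a, Finset.mem_image.2 ⟨m - 1, Finset.mem_range.2 (by omega), rfl⟩, ?_⟩
      rw [← Function.iterate_succ_apply' f (m-1) a, Nat.succ_eq_add_one, Nat.sub_add_cancel hm, hma]
      rfl
    · refine ⟨f^[t - 1] a, Finset.mem_image.2 ⟨t - 1, Finset.mem_range.2 (by omega), rfl⟩, ?_⟩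
      rw [← Function.iterate_succ_apply' f (t-1) a, Nat.succ_eq_add_one, Nat.sub_add_cancel htp]
  have hinjOn : Set.InjOn f ↑O := by
    have hfin : (↑O : Set (Fin n)).Finite := O.finite_toSet
    have hm' : Set.MapsTo f ↑O ↑O := fun x hx => hmaps x hx
    have hs' : Set.SurjOn f ↑O ↑O := by
      intro y hy
      obtain ⟨x, hx, hfx⟩ := hsurj y hy
      exact ⟨x, hx, hfx⟩
    exact ((hfin.surjOn_iff_bijOn_of_mapsTo hm').1 hs').injOn
  set e : Fin n → Fin n := fun x => if x ∈ O then f x else x with he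
  have he_inj : Function.Injective e := by
    intro x y hxy
    by_cases hx : x ∈ O <;> by_cases hy : y ∈ O <;> simp only [he, hx, hy, if_pos, if_neg,
      if_true, if_false] at hxy
    · exact hinjOn hx hy hxy
    · exact absurd (hxy ▸ hmaps x hx) hy
    · exact absurd (hxy ▸ hmaps y hy) hx
    · exact hxy
  have he_bij : Function.Bijective e := Finite.injective_iff_bijective.1 he_inj
  set E : Equiv.Perm (Fin n) := Equiv.ofBijective e he_bij with hE
  have hEap : ∀ x, E x = e x := fun x => rfl
  have hEsymm_not : ∀ i ∉ O, E.symm i = i := by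
    intro i hi
    apply E.injective
    rw [Equiv.apply_symm_apply, hEap, he]
    simp [hi]
  set π' : Equiv.Perm (Fin n) := E.symm.trans π with hπ'
  have hπ'ap : ∀ i, π' i = π (E.symm i) := fun i => rfl
  have hstep : ∀ i ∈ O, u i (π i) < u i (π' i) := by
    intro i hi
    obtain ⟨j, hj, hfj⟩ := hsurj i hi
    have hEj : E j = i := by rw [hEap, he]; simp [hj, hfj]
    have hEsi : E.symm i = j := by rw [← hEj, Equiv.symm_apply_apply]
    rw [hπ'ap, hEsi]
    have := hf j
    rw [hfj] at this
    exact this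
  have hle : ∀ i, u i (π i) ≤ u i (π' i) := by
    intro i
    by_cases hi : i ∈ O
    · exact (hstep i hi).le
    · rw [hπ'ap, hEsymm_not i hi]
  have hπ'mem : π' ∈ P := by
    rw [hP, Finset.mem_filter]
    exact ⟨Finset.mem_univ _, fun i => (hπfeas i).trans (hle i)⟩
  have hlt : ∑ i, u i (π i) < ∑ i, u i (π' i) :=
    Finset.sum_lt_sum (fun i _ => hle i) ⟨a, Finset.mem_univ a, hstep a haO⟩
  have := hπmax π' hπ'mem
  linarith
/-- The general approximation framework: given an `α`-EFX partial allocation `S` in which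
every agent values her own bundle at least `β` times any unallocated item, there is a
complete allocation that is `min α (β/(β+1))`-EFX and makes no agent worse off than in `S`. -/
theorem framework_efx {ι : Type*} [DecidableEq ι] (n : ℕ) (hn : 1 ≤ n)
    (M : Finset ι) (w : Fin n → ι → ℝ)
    (hw : ∀ i, ∀ g ∈ M, 0 ≤ w i g)
    (α β : ℝ) (hα0 : 0 < α) (hα1 : α ≤ 1) (hβ : 0 < β)
    (S : Fin n → Finset ι)
    (hSsub : ∀ i, S i ⊆ M)
    (hSdisj : ∀ i j, i ≠ j → Disjoint (S i) (S j))
    (hSefx : ∀ i j, ∀ g ∈ S j, α * ∑ x ∈ (S j).erase g, w i x ≤ ∑ x ∈ S i, w i x)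
    (hSval : ∀ i, ∀ h ∈ M, (∀ j, h ∉ S j) → β * w i h ≤ ∑ x ∈ S i, w i x) :
    ∃ A : Fin n → Finset ι,
      (∀ i, A i ⊆ M) ∧
      (∀ g ∈ M, ∃ i, g ∈ A i) ∧
      (∀ i j, i ≠ j → Disjoint (A i) (A j)) ∧
      (∀ i j, ∀ g ∈ A j,
        min α (β / (β + 1)) * ∑ x ∈ (A j).erase g, w i x ≤ ∑ x ∈ A i, w i x) ∧
      (∀ i, ∑ x ∈ S i, w i x ≤ ∑ x ∈ A i, w i x) := by
  classical
  set μ := min α (β / (β + 1)) with hμdef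
  have hβ1 : (0:ℝ) < β + 1 := by linarith
  have hμα : μ ≤ α := min_le_left _ _
  have hμβ : μ ≤ β / (β + 1) := min_le_right _ _
  have hμ1 : μ ≤ 1 := hμα.trans hα1
  have hnpos : 0 < n := hn
  have hsum_nonneg : ∀ (i : Fin n) (T : Finset ι), T ⊆ M → 0 ≤ ∑ x ∈ T, w i x :=
    fun i T hT => Finset.sum_nonneg fun x hx => hw i x (hT hx)
  suffices H : ∀ N (B : Fin n → Finset ι),
      (∀ i, B i ⊆ M) →
      (∀ i j, i ≠ j → Disjoint (B i) (B j)) →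
      (∀ i j, ∀ g ∈ B j, μ * ∑ x ∈ (B j).erase g, w i x ≤ ∑ x ∈ B i, w i x) →
      (∀ i, ∑ x ∈ S i, w i x ≤ ∑ x ∈ B i, w i x) →
      (∀ h ∈ M, (∀ j, h ∉ B j) → ∀ i, β * w i h ≤ ∑ x ∈ B i, w i x) →
      (M.filter (fun g => ∀ j, g ∉ B j)).card ≤ N →
      ∃ A : Fin n → Finset ι,
        (∀ i, A i ⊆ M) ∧
        (∀ g ∈ M, ∃ i, g ∈ A i) ∧
        (∀ i j, i ≠ j → Disjoint (A i) (A j)) ∧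
        (∀ i j, ∀ g ∈ A j, μ * ∑ x ∈ (A j).erase g, w i x ≤ ∑ x ∈ A i, w i x) ∧
        (∀ i, ∑ x ∈ S i, w i x ≤ ∑ x ∈ A i, w i x) by
    refine H M.card S hSsub hSdisj ?_ (fun i => le_refl _)
      (fun h hM hun i => hSval i h hM hun) (Finset.card_filter_le _ _)
    intro i j g hg
    refine le_trans (mul_le_mul_of_nonneg_right hμα
      (hsum_nonneg i _ ((Finset.erase_subset _ _).trans (hSsub j)))) (hSefx i j g hg)
  intro N
  induction N with
  | zero =>
    intro B hsub hdisj hefx hval hchar hcard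
    refine ⟨B, hsub, ?_, hdisj, hefx, hval⟩
    intro g hg
    by_contra hc
    push_neg at hc
    have hmem : g ∈ M.filter (fun g => ∀ j, g ∉ B j) := Finset.mem_filter.2 ⟨hg, hc⟩
    have := Finset.card_pos.2 ⟨g, hmem⟩
    omega
  | succ N ih =>
    intro B hsub hdisj hefx hval hchar hcard
    by_cases hex : ∃ g ∈ M, ∀ j, g ∉ B j
    · obtain ⟨h, hM, hun⟩ := hex
      obtain ⟨π, hfeas, k, hk⟩ := exists_unenvied_perm hnpos (fun i j => ∑ x ∈ B j, w i x)
      have hfeas' : ∀ i, ∑ x ∈ B i, w i x ≤ ∑ x ∈ B (π i), w i x := hfeas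
      have hk' : ∀ i, ∑ x ∈ B (π k), w i x ≤ ∑ x ∈ B (π i), w i x := hk
      set C : Fin n → Finset ι :=
        fun i => if i = k then insert h (B (π k)) else B (π i) with hC
      have hCk : C k = insert h (B (π k)) := if_pos rfl
      have hCne : ∀ i, i ≠ k → C i = B (π i) := fun i hi => if_neg hi
      have hCsub : ∀ i, C i ⊆ M := by
        intro i
        by_cases hik : i = k
        · rw [hik, hCk]; exact Finset.insert_subset hM (hsub _)
        · rw [hCne i hik]; exact hsub _
      have hCsum_ge : ∀ i i', ∑ x ∈ B (π i'), w i x ≤ ∑ x ∈ C i', w i x := by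
        intro i i'
        by_cases hik : i' = k
        · rw [hik, hCk, Finset.sum_insert (hun (π k))]
          have := hw i h hM
          linarith
        · rw [hCne i' hik]
      have hCnotin : ∀ g, (∀ j, g ∉ C j) → ∀ j, g ∉ B j := by
        intro g hg j
        have hj := hg (π.symm j)
        by_cases hjk : π.symm j = k
        · have hπk : π k = j := by rw [← hjk, Equiv.apply_symm_apply]
          rw [hjk, hCk, hπk] at hj
          exact fun hmem => hj (Finset.mem_insert_of_mem hmem)
        · rw [hCne _ hjk, Equiv.apply_symm_apply] at hj
          exact hj
      have hCdisj : ∀ i j, i ≠ j → Disjoint (C i) (C j) := by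
        intro i j hij
        have hbase : Disjoint (B (π i)) (B (π j)) :=
          hdisj _ _ (fun hh => hij (π.injective hh))
        by_cases hik : i = k
        · have hjne : j ≠ k := fun hjk => hij (hik.trans hjk.symm)
          rw [hik, hCk, hCne j hjne]
          exact Finset.disjoint_insert_left.2 ⟨hun (π j),
            hdisj (π k) (π j) (fun hh => hjne ((π.injective hh).symm))⟩
        · by_cases hjk : j = k
          · rw [hjk, hCk, hCne i hik]
            exact Finset.disjoint_insert_right.2 ⟨hun (π i),
              hdisj _ _ (fun hh => hij ((π.injective hh).trans hjk.symm))⟩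
          · rw [hCne i hik, hCne j hjk]; exact hbase
      have hCval : ∀ i, ∑ x ∈ S i, w i x ≤ ∑ x ∈ C i, w i x :=
        fun i => (hval i).trans ((hfeas' i).trans (hCsum_ge i i))
      have hCchar : ∀ h' ∈ M, (∀ j, h' ∉ C j) → ∀ i, β * w i h' ≤ ∑ x ∈ C i, w i x := by
        intro h' hM' hun' i
        exact (hchar h' hM' (hCnotin h' hun') i).trans ((hfeas' i).trans (hCsum_ge i i))
      have hCefx : ∀ i j, ∀ g ∈ C j, μ * ∑ x ∈ (C j).erase g, w i x ≤ ∑ x ∈ C i, w i x := by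
        intro i j g hg
        have hCi : ∑ x ∈ B (π i), w i x ≤ ∑ x ∈ C i, w i x := hCsum_ge i i
        have hBi : ∑ x ∈ B i, w i x ≤ ∑ x ∈ B (π i), w i x := hfeas' i
        by_cases hjk : j = k
        · rw [hjk, hCk] at hg
          rw [hjk, hCk]
          have hkT : ∑ x ∈ B (π k), w i x ≤ ∑ x ∈ B (π i), w i x := hk' i
          have hTnn : 0 ≤ ∑ x ∈ B (π k), w i x := hsum_nonneg i _ (hsub _)
          rcases Finset.mem_insert.1 hg with rfl | hgT
          · rw [Finset.erase_insert (hun (π k))]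
            nlinarith [mul_le_mul_of_nonneg_right hμ1 hTnn]
          · have hgh : g ≠ h := fun hgh => hun (π k) (hgh ▸ hgT)
            rw [Finset.erase_insert_of_ne (Ne.symm hgh),
              Finset.sum_insert (fun hmem => hun (π k) (Finset.erase_subset _ _ hmem))]
            have hZnn : 0 ≤ ∑ x ∈ (B (π k)).erase g, w i x :=
              hsum_nonneg i _ ((Finset.erase_subset _ _).trans (hsub _))
            have hZle : ∑ x ∈ (B (π k)).erase g, w i x ≤ ∑ x ∈ B (π k), w i x :=
              Finset.sum_le_sum_of_subset_of_nonneg (Finset.erase_subset _ _)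
                (fun x hx _ => hw i x (hsub _ hx))
            have hy : β * w i h ≤ ∑ x ∈ B (π i), w i x := (hchar h hM hun i).trans hBi
            have hynn : 0 ≤ w i h := hw i h hM
            set y := w i h
            set Z := ∑ x ∈ (B (π k)).erase g, w i x
            set s := ∑ x ∈ B (π i), w i x
            have hkey : β / (β + 1) * (y + Z) ≤ s := by
              rw [div_mul_eq_mul_div, div_le_iff₀ hβ1]
              nlinarith
            have hμyz : μ * (y + Z) ≤ β / (β + 1) * (y + Z) :=
              mul_le_mul_of_nonneg_right hμβ (by linarith)
            linarith
        · rw [hCne j hjk]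
          exact (hefx i (π j) g ((hCne j hjk) ▸ hg)).trans (hBi.trans hCi)
      have hCcard : (M.filter (fun g => ∀ j, g ∉ C j)).card ≤ N := by
        have hsubset : M.filter (fun g => ∀ j, g ∉ C j) ⊆
            (M.filter (fun g => ∀ j, g ∉ B j)).erase h := by
          intro g hg
          rw [Finset.mem_filter] at hg
          refine Finset.mem_erase.2 ⟨?_, Finset.mem_filter.2 ⟨hg.1, hCnotin g hg.2⟩⟩
          intro hgh
          exact hg.2 k (hgh ▸ (by rw [hCk]; exact Finset.mem_insert_self h _ : h ∈ C k))
        have hhmem : h ∈ M.filter (fun g => ∀ j, g ∉ B j) := Finset.mem_filter.2 ⟨hM, hun⟩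
        have h1 := Finset.card_le_card hsubset
        rw [Finset.card_erase_of_mem hhmem] at h1
        have h2 := Finset.card_pos.2 ⟨h, hhmem⟩
        omega
      exact ih C hCsub hCdisj hCefx hCval hCchar hCcard
    · push_neg at hex
      exact ⟨B, hsub, hex, hdisj, hefx, hval⟩
end

section
/- Let n agents have additive valuations over a finite set M of m items, and suppose that for some ℓ with 1 ≤ ℓ ≤ m there exist ℓ distinct items g_1,...,g_ℓ ∈ M such that for every agent i: v_i({g_1}) ≥ v_i({g_2}) ≥ ... ≥ v_i({g_ℓ}), and v_i({g_ℓ}) ≥ v_i({h}) for every item h ∉ {g_1,...,g_ℓ} (i.e., all agents agree on the set of the top ℓ items and on their order). Then, with k = ⌊ℓ/n⌋, there exists a complete allocation of M that is k/(k+1)-EFX. -/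
lemma exists_unenvied_rearrangement {ι : Type*} (n : ℕ) (hn : 1 ≤ n)
    (v : Fin n → Finset ι → ℝ) (B : Fin n → Finset ι) :
    ∃ σ : Fin n → Fin n, Function.Bijective σ ∧
      (∀ i, v i (B i) ≤ v i (B (σ i))) ∧
      ∃ j, ∀ i, v i (B (σ j)) ≤ v i (B (σ i)) := by
  classical
  have hx0 : Fin n := ⟨0, hn⟩
  set P : (Fin n → Fin n) → Prop :=
    fun σ => Function.Injective σ ∧ ∀ i, v i (B i) ≤ v i (B (σ i)) with hP
  have hne : (Finset.univ.filter P).Nonempty := by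
    refine ⟨id, ?_⟩
    simp [hP, Function.injective_id]
  obtain ⟨σ, hmem, hmax⟩ := Finset.exists_max_image (Finset.univ.filter P)
    (fun σ => ∑ i, v i (B (σ i))) hne
  rw [Finset.mem_filter] at hmem
  obtain ⟨-, hinj, hle⟩ := hmem
  refine ⟨σ, Finite.injective_iff_bijective.mp hinj, hle, ?_⟩
  by_contra hcon
  push_neg at hcon
  choose f hf using hcon
  obtain ⟨x, p, hp, hfix⟩ : ∃ (x : Fin n) (p : ℕ), 0 < p ∧ f^[p] x = x := by
    obtain ⟨a, b, hab, heq⟩ :=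
      Finite.exists_ne_map_eq_of_infinite (fun t : ℕ => f^[t] hx0)
    rcases hab.lt_or_gt with h | h
    · exact ⟨f^[a] hx0, b - a, by omega, by
        rw [← Function.iterate_add_apply, Nat.sub_add_cancel h.le]; exact heq.symm⟩
    · exact ⟨f^[b] hx0, a - b, by omega, by
        rw [← Function.iterate_add_apply, Nat.sub_add_cancel h.le]; exact heq⟩
  set O : Finset (Fin n) := (Finset.range p).image (fun t => f^[t] x) with hO
  have hiter : ∀ q, f^[p * q] x = x := by
    intro q
    induction q with
    | zero => simp
    | succ q ih => rw [Nat.mul_succ, Function.iterate_add_apply, hfix, ih]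
  have hmemO : ∀ s : ℕ, f^[s] x ∈ O := by
    intro s
    have h1 : f^[s] x = f^[s % p] x := by
      conv_lhs => rw [← Nat.mod_add_div s p]
      rw [Function.iterate_add_apply, hiter]
    rw [h1]
    exact Finset.mem_image.mpr ⟨s % p, Finset.mem_range.mpr (Nat.mod_lt s hp), rfl⟩
  have hOrep : ∀ i ∈ O, ∃ t, f^[t] x = i := by
    intro i hi
    obtain ⟨t, -, ht⟩ := Finset.mem_image.mp hi
    exact ⟨t, ht⟩
  set τ : Fin n → Fin n := fun i => if i ∈ O then f^[p-1] i else i with hτ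
  have hτO : ∀ i ∈ O, τ i ∈ O := by
    intro i hi
    obtain ⟨t, ht⟩ := hOrep i hi
    simp only [hτ, if_pos hi]
    rw [← ht, ← Function.iterate_add_apply]
    exact hmemO _
  have hfτ : ∀ i ∈ O, f (τ i) = i := by
    intro i hi
    obtain ⟨t, ht⟩ := hOrep i hi
    simp only [hτ, if_pos hi]
    have h1 : f (f^[p-1] i) = f^[p-1+1] i := (Function.iterate_succ_apply' f (p-1) i).symm
    rw [h1, Nat.sub_add_cancel hp]
    rw [← ht, ← Function.iterate_add_apply, Nat.add_comm p t,
      Function.iterate_add_apply, hfix]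
  have hτinj : Function.Injective τ := by
    intro a b hab
    by_cases ha : a ∈ O <;> by_cases hb : b ∈ O
    · rw [← hfτ a ha, ← hfτ b hb, hab]
    · exfalso
      have h1 : τ a ∈ O := hτO a ha
      have h2 : τ b = b := by simp only [hτ, if_neg hb]
      rw [hab, h2] at h1
      exact hb h1
    · exfalso
      have h1 : τ b ∈ O := hτO b hb
      have h2 : τ a = a := by simp only [hτ, if_neg ha]
      rw [← hab, h2] at h1
      exact ha h1
    · have h2 : τ a = a := by simp only [hτ, if_neg ha]
      have h3 : τ b = b := by simp only [hτ, if_neg hb]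
      rw [h2, h3] at hab
      exact hab
  have hgain : ∀ i ∈ O, v i (B (σ i)) < v i (B (σ (τ i))) := by
    intro i hi
    have h1 := hf (τ i)
    rw [hfτ i hi] at h1
    exact h1
  have hmemP : (σ ∘ τ) ∈ Finset.univ.filter P := by
    rw [Finset.mem_filter]
    refine ⟨Finset.mem_univ _, hinj.comp hτinj, ?_⟩
    intro i
    by_cases hi : i ∈ O
    · exact (hle i).trans (hgain i hi).le
    · have h2 : τ i = i := by simp only [hτ, if_neg hi]
      simpa [Function.comp, h2] using hle i
  have hsum : ∑ i, v i (B (σ i)) < ∑ i, v i (B (σ (τ i))) := by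
    apply Finset.sum_lt_sum
    · intro i _
      by_cases hi : i ∈ O
      · exact (hgain i hi).le
      · have h2 : τ i = i := by simp only [hτ, if_neg hi]
        rw [h2]
    · refine ⟨x, Finset.mem_univ x, hgain x ?_⟩
      have := hmemO 0
      simpa using this
  exact absurd (hmax _ hmemP) (not_le.mpr hsum)


/-- Relaxed top ranking: if all agents agree on the set of the top `ℓ` items and also on
their order w.r.t. value, then with `k = ⌊ℓ/n⌋` a `k/(k+1)`-EFX complete allocation exists. -/
theorem efx_relaxed_top_ranking {ι : Type*} [DecidableEq ι] (n : ℕ) (hn : 1 ≤ n)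
    (M : Finset ι) (w : Fin n → ι → ℝ)
    (hw : ∀ i, ∀ g ∈ M, 0 ≤ w i g)
    (ℓ : ℕ) (hℓ1 : 1 ≤ ℓ) (hℓm : ℓ ≤ M.card)
    (g : Fin ℓ → ι) (hginj : Function.Injective g) (hgM : ∀ a, g a ∈ M)
    (horder : ∀ i, ∀ a b : Fin ℓ, a ≤ b → w i (g b) ≤ w i (g a))
    (hbottom : ∀ i, ∀ h ∈ M, (∀ a, g a ≠ h) →
      w i h ≤ w i (g ⟨ℓ - 1, Nat.sub_lt hℓ1 one_pos⟩)) :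
    ∃ A : Fin n → Finset ι,
      (∀ i, A i ⊆ M) ∧
      (∀ x ∈ M, ∃ i, x ∈ A i) ∧
      (∀ i j, i ≠ j → Disjoint (A i) (A j)) ∧
      (∀ i j, ∀ x ∈ A j,
        ((ℓ / n : ℕ) : ℝ) / (((ℓ / n : ℕ) : ℝ) + 1) * ∑ y ∈ (A j).erase x, w i y
          ≤ ∑ y ∈ A i, w i y) := by
  classical
  set k : ℕ := ℓ / n with hk
  set α : ℝ := (k : ℝ) / ((k : ℝ) + 1) with hα
  have hkpos : (0:ℝ) < (k:ℝ) + 1 := by positivity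
  have hα0 : 0 ≤ α := by positivity
  have hα1 : α ≤ 1 := by
    rw [hα, div_le_one hkpos]; linarith
  set v : Fin n → Finset ι → ℝ := fun i S => ∑ y ∈ S, w i y with hv
  set glast : ι := g ⟨ℓ - 1, Nat.sub_lt hℓ1 one_pos⟩ with hglast
  set G : ℕ → Finset ι := fun t =>
    (Finset.univ.filter (fun a : Fin ℓ => a.val < t)).image g with hG
  have hGmem : ∀ t x, x ∈ G t ↔ ∃ a : Fin ℓ, a.val < t ∧ g a = x := by
    intro t x
    simp [hG, Finset.mem_image, Finset.mem_filter]
  have hGsub : ∀ t, G t ⊆ M := by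
    intro t x hx
    obtain ⟨a, -, ha⟩ := (hGmem t x).mp hx
    exact ha ▸ hgM a
  have hvnonneg : ∀ (i) (S : Finset ι), S ⊆ M → 0 ≤ v i S := by
    intro i S hS
    exact Finset.sum_nonneg fun y hy => hw i y (hS hy)
  have hverase : ∀ (i) (S : Finset ι) (x), S ⊆ M → x ∈ S →
      v i (S.erase x) ≤ v i S := by
    intro i S x hS hx
    have h1 := Finset.sum_erase_add S (w i) hx
    have h2 : 0 ≤ w i x := hw i x (hS hx)
    simp only [hv]
    linarith [h1]
  -- Phase 1 : allocate top items in decreasing order, exact EFX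
  have claim1 : ∀ t, t ≤ ℓ → ∃ A : Fin n → Finset ι,
      (∀ i, A i ⊆ G t) ∧ (∀ x ∈ G t, ∃ i, x ∈ A i) ∧
      (∀ i j, i ≠ j → Disjoint (A i) (A j)) ∧
      (∀ i j, ∀ x ∈ A j, v i ((A j).erase x) ≤ v i (A i)) := by
    intro t
    induction t with
    | zero =>
      intro _
      refine ⟨fun _ => ∅, fun i => ?_, fun x hx => ?_, by simp, by simp [hv]⟩
      · simp
      · rw [hGmem] at hx; obtain ⟨a, ha, -⟩ := hx; omega
    | succ t ih =>
      intro ht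
      obtain ⟨A, hsub, hcov, hdis, hefx⟩ := ih (Nat.le_of_succ_le ht)
      obtain ⟨σ, hσbij, hσle, j, hj⟩ := exists_unenvied_rearrangement n hn v A
      set gt : ι := g ⟨t, ht⟩ with hgt
      set C : Fin n → Finset ι := fun i => A (σ i) with hC
      have hCsub : ∀ i, C i ⊆ G t := fun i => hsub _
      have hgtnot : ∀ i, gt ∉ C i := by
        intro i hmem
        obtain ⟨a, ha, hax⟩ := (hGmem t gt).mp (hCsub i hmem)
        have : a = ⟨t, ht⟩ := hginj hax
        rw [this] at ha
        have h2 : (⟨t, ht⟩ : Fin ℓ).val = t := rfl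
        omega
      set A' : Fin n → Finset ι := fun i => if i = j then insert gt (C j) else C i
        with hA'
      have hCle : ∀ i, v i (C i) ≤ v i (A' i) := by
        intro i
        by_cases hij : i = j
        · subst hij
          simp only [hA', if_pos rfl, hv]
          rw [Finset.sum_insert (hgtnot i)]
          have : 0 ≤ w i gt := hw i gt (hgM _)
          linarith
        · simp only [hA', if_neg hij]
          exact le_refl _
      have hGsucc : ∀ x, x ∈ G (t+1) ↔ x = gt ∨ x ∈ G t := by
        intro x
        rw [hGmem, hGmem]
        constructor
        · rintro ⟨a, ha, rfl⟩
          by_cases hat : a.val = t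
          · left; rw [hgt]; congr 1; exact Fin.ext hat
          · right; exact ⟨a, by omega, rfl⟩
        · rintro (rfl | ⟨a, ha, rfl⟩)
          · exact ⟨⟨t, ht⟩, by simp, rfl⟩
          · exact ⟨a, by omega, rfl⟩
      refine ⟨A', ?_, ?_, ?_, ?_⟩
      · intro i x hx
        rw [hGsucc]
        simp only [hA'] at hx
        by_cases hij : i = j
        · rw [if_pos hij] at hx
          rcases Finset.mem_insert.mp hx with h | h
          · left; exact h
          · right; exact hCsub j h
        · rw [if_neg hij] at hx
          right; exact hCsub i hx
      · intro x hx
        rcases (hGsucc x).mp hx with rfl | hx'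
        · exact ⟨j, by simp [hA']⟩
        · obtain ⟨i', hi'⟩ := hcov x hx'
          obtain ⟨i, rfl⟩ := hσbij.2 i'
          refine ⟨i, ?_⟩
          by_cases hij : i = j
          · subst hij; simp only [hA', if_pos rfl]
            exact Finset.mem_insert_of_mem hi'
          · simp only [hA', if_neg hij]; exact hi'
      · intro i j' hij'
        have hdisC : Disjoint (C i) (C j') :=
          hdis _ _ (fun h => hij' (hσbij.1 h))
        by_cases h1 : i = j <;> by_cases h2 : j' = j
        · exact absurd (h1.trans h2.symm) hij'
        · subst h1
          simp only [hA', if_pos rfl, if_neg h2]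
          rw [Finset.disjoint_insert_left]
          exact ⟨hgtnot j', hdisC⟩
        · subst h2
          simp only [hA', if_pos rfl, if_neg h1]
          rw [disjoint_comm, Finset.disjoint_insert_left]
          exact ⟨hgtnot i, hdisC.symm⟩
        · simp only [hA', if_neg h1, if_neg h2]
          exact hdisC
      · intro i j' x hx
        have hCefx : ∀ i₀ j₀, ∀ x₀ ∈ C j₀, v i₀ ((C j₀).erase x₀) ≤ v i₀ (C i₀) :=
          fun i₀ j₀ x₀ hx₀ => (hefx i₀ (σ j₀) x₀ hx₀).trans (hσle i₀)
        by_cases h2 : j' = j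
        · subst h2
          simp only [hA', if_pos rfl] at hx ⊢
          by_cases hxg : x = gt
          · subst hxg
            rw [Finset.erase_insert (hgtnot j')]
            exact (hj i).trans (hCle i)
          · have hxC : x ∈ C j' := Finset.mem_insert.mp hx |>.resolve_left hxg
            rw [Finset.erase_insert_of_ne (Ne.symm hxg)]
            have hgtx : w i gt ≤ w i x := by
              obtain ⟨a, ha, rfl⟩ := (hGmem t x).mp (hCsub j' hxC)
              exact horder i a ⟨t, ht⟩ (by simp [Fin.le_def]; omega)
            have hsum1 : v i (insert gt ((C j').erase x)) =
                w i gt + v i ((C j').erase x) := by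
              simp only [hv]
              rw [Finset.sum_insert (fun hc => hgtnot j' (Finset.erase_subset _ _ hc))]
            have hsum2 : v i ((C j').erase x) + w i x = v i (C j') := by
              simp only [hv]; exact Finset.sum_erase_add _ _ hxC
            have := (hj i).trans (hCle i)
            rw [hsum1]
            linarith
        · simp only [hA', if_neg h2] at hx ⊢
          exact (hCefx i j' x hx).trans (hCle i)
  obtain ⟨A₀, h₀sub, h₀cov, h₀dis, h₀efx⟩ := claim1 ℓ (le_refl ℓ)
  have hglastmem : ∀ (i) (x : ι), x ∈ G ℓ → w i glast ≤ w i x := by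
    intro i x hx
    obtain ⟨a, ha, rfl⟩ := (hGmem ℓ x).mp hx
    refine horder i a ⟨ℓ-1, Nat.sub_lt hℓ1 one_pos⟩ ?_
    have := a.is_lt
    simp only [Fin.le_def]
    omega
  have hwglast0 : ∀ i, 0 ≤ w i glast := fun i => hw i glast (hgM _)
  have hcardw : ∀ (i) (S : Finset ι), S ⊆ G ℓ → (S.card : ℝ) * w i glast ≤ v i S := by
    intro i S hS
    have h1 := Finset.card_nsmul_le_sum S (w i) (w i glast)
      (fun x hx => hglastmem i x (hS hx))
    simpa [nsmul_eq_mul, hv] using h1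
  have hfloor : ∀ i, (k:ℝ) * w i glast ≤ v i (A₀ i) := by
    intro i
    by_cases hcase : ∃ j0, k + 1 ≤ (A₀ j0).card
    · obtain ⟨j0, hj0⟩ := hcase
      obtain ⟨x, hx⟩ : (A₀ j0).Nonempty := Finset.card_pos.mp (Nat.lt_of_lt_of_le (Nat.succ_pos k) hj0)
      have h1 : ((A₀ j0).erase x).card = (A₀ j0).card - 1 := Finset.card_erase_of_mem hx
      have h2 := hcardw i ((A₀ j0).erase x) ((Finset.erase_subset _ _).trans (h₀sub j0))
      have h3 : (k:ℝ) ≤ (((A₀ j0).erase x).card : ℝ) := by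
        rw [h1]; exact_mod_cast (by omega : k ≤ (A₀ j0).card - 1)
      calc (k:ℝ) * w i glast ≤ (((A₀ j0).erase x).card : ℝ) * w i glast :=
            mul_le_mul_of_nonneg_right h3 (hwglast0 i)
        _ ≤ v i ((A₀ j0).erase x) := h2
        _ ≤ v i (A₀ i) := h₀efx i j0 x hx
    · push_neg at hcase
      have hcards : ∀ j0, (A₀ j0).card ≤ k := fun j0 => by have := hcase j0; omega
      have hunion : Finset.univ.biUnion A₀ = G ℓ := by
        apply Finset.Subset.antisymm
        · intro x hx
          obtain ⟨i0, -, hi0⟩ := Finset.mem_biUnion.mp hx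
          exact h₀sub i0 hi0
        · intro x hx
          obtain ⟨i0, hi0⟩ := h₀cov x hx
          exact Finset.mem_biUnion.mpr ⟨i0, Finset.mem_univ _, hi0⟩
      have hGcard : (G ℓ).card = ℓ := by
        rw [hG]
        rw [Finset.card_image_of_injective _ hginj]
        have : (Finset.univ.filter (fun a : Fin ℓ => a.val < ℓ)) = Finset.univ := by
          apply Finset.filter_true_of_mem
          intro a _
          exact a.is_lt
        rw [this, Finset.card_univ, Fintype.card_fin]
      have hsumcard : ∑ j0, (A₀ j0).card = ℓ := by
        rw [← Finset.card_biUnion (fun x _ y _ hxy => h₀dis x y hxy), hunion, hGcard]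
      have hnk : k * n ≤ ℓ := Nat.div_mul_le_self ℓ n
      have hcardi : (A₀ i).card = k := by
        by_contra hci
        have h4 : (A₀ i).card < k := lt_of_le_of_ne (hcards i) hci
        have h5 : ∑ j0, (A₀ j0).card < ∑ _j0 : Fin n, k :=
          Finset.sum_lt_sum (fun j0 _ => hcards j0) ⟨i, Finset.mem_univ i, h4⟩
        rw [hsumcard] at h5
        simp only [Finset.sum_const, Finset.card_univ, Fintype.card_fin,
          smul_eq_mul] at h5
        have hnk' : n * k ≤ ℓ := by rw [Nat.mul_comm]; exact hnk
        exact absurd h5 (not_lt.mpr hnk')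
      calc (k:ℝ) * w i glast = ((A₀ i).card : ℝ) * w i glast := by rw [hcardi]
        _ ≤ v i (A₀ i) := hcardw i (A₀ i) (h₀sub i)
  -- Phase 2 : bag filling with remaining small items
  have claim2 : ∀ s : Finset ι, s ⊆ M \ G ℓ → ∃ A : Fin n → Finset ι,
      (∀ i, A i ⊆ G ℓ ∪ s) ∧ (∀ x ∈ G ℓ ∪ s, ∃ i, x ∈ A i) ∧
      (∀ i j, i ≠ j → Disjoint (A i) (A j)) ∧
      (∀ i, (k:ℝ) * w i glast ≤ v i (A i)) ∧
      (∀ i j, ∀ x ∈ A j, α * v i ((A j).erase x) ≤ v i (A i)) := by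
    intro s
    induction s using Finset.induction_on with
    | empty =>
      intro _
      refine ⟨A₀, by simpa using h₀sub, by simpa using h₀cov, h₀dis, hfloor, ?_⟩
      intro i j x hx
      have h1 : v i ((A₀ j).erase x) ≤ v i (A₀ i) := h₀efx i j x hx
      have h2 : 0 ≤ v i ((A₀ j).erase x) :=
        hvnonneg i _ (((Finset.erase_subset _ _).trans (h₀sub j)).trans (hGsub ℓ))
      nlinarith
    | @insert a s hanot ih =>
      intro hsub2
      have hsub3 : s ⊆ M \ G ℓ := (Finset.subset_insert a s).trans hsub2
      obtain ⟨A, hsub, hcov, hdis, hfl, hefx⟩ := ih hsub3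
      have haM : a ∈ M := (Finset.mem_sdiff.mp (hsub2 (Finset.mem_insert_self a s))).1
      have haG : a ∉ G ℓ := (Finset.mem_sdiff.mp (hsub2 (Finset.mem_insert_self a s))).2
      have hwa : ∀ i, w i a ≤ w i glast := by
        intro i
        refine hbottom i a haM ?_
        intro b hb
        exact haG ((hGmem ℓ a).mpr ⟨b, b.is_lt, hb⟩)
      obtain ⟨σ, hσbij, hσle, j, hj⟩ := exists_unenvied_rearrangement n hn v A
      set C : Fin n → Finset ι := fun i => A (σ i) with hC
      have hCsub : ∀ i, C i ⊆ G ℓ ∪ s := fun i => hsub _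
      have hanotC : ∀ i, a ∉ C i := by
        intro i hmem
        rcases Finset.mem_union.mp (hCsub i hmem) with h | h
        · exact haG h
        · exact hanot h
      set A' : Fin n → Finset ι := fun i => if i = j then insert a (C j) else C i
        with hA'
      have hCsubM : ∀ i, C i ⊆ M := by
        intro i
        refine (hCsub i).trans ?_
        intro y hy
        rcases Finset.mem_union.mp hy with h | h
        · exact hGsub ℓ h
        · exact (Finset.mem_sdiff.mp (hsub3 h)).1
      have hCle : ∀ i, v i (C i) ≤ v i (A' i) := by
        intro i
        by_cases hij : i = j
        · subst hij
          simp only [hA', if_pos rfl, hv]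
          rw [Finset.sum_insert (hanotC i)]
          have : 0 ≤ w i a := hw i a haM
          linarith
        · simp only [hA', if_neg hij]
          exact le_refl _
      have hflC : ∀ i, (k:ℝ) * w i glast ≤ v i (C i) := fun i => (hfl i).trans (hσle i)
      refine ⟨A', ?_, ?_, ?_, ?_, ?_⟩
      · intro i x hx
        rw [Finset.union_insert]
        simp only [hA'] at hx
        by_cases hij : i = j
        · rw [if_pos hij] at hx
          rcases Finset.mem_insert.mp hx with h | h
          · exact h ▸ Finset.mem_insert_self _ _
          · exact Finset.mem_insert_of_mem (hCsub j h)
        · rw [if_neg hij] at hx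
          exact Finset.mem_insert_of_mem (hCsub i hx)
      · intro x hx
        rw [Finset.union_insert] at hx
        rcases Finset.mem_insert.mp hx with rfl | hx'
        · exact ⟨j, by simp [hA']⟩
        · obtain ⟨i', hi'⟩ := hcov x hx'
          obtain ⟨i, rfl⟩ := hσbij.2 i'
          refine ⟨i, ?_⟩
          by_cases hij : i = j
          · subst hij
            simp only [hA', if_pos rfl]
            exact Finset.mem_insert_of_mem hi'
          · simp only [hA', if_neg hij]
            exact hi'
      · intro i j' hij'
        have hdisC : Disjoint (C i) (C j') := hdis _ _ (fun h => hij' (hσbij.1 h))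
        by_cases h1 : i = j <;> by_cases h2 : j' = j
        · exact absurd (h1.trans h2.symm) hij'
        · subst h1
          simp only [hA', if_pos rfl, if_neg h2]
          rw [Finset.disjoint_insert_left]
          exact ⟨hanotC j', hdisC⟩
        · subst h2
          simp only [hA', if_pos rfl, if_neg h1]
          rw [disjoint_comm, Finset.disjoint_insert_left]
          exact ⟨hanotC i, hdisC.symm⟩
        · simp only [hA', if_neg h1, if_neg h2]
          exact hdisC
      · intro i
        exact (hflC i).trans (hCle i)
      · intro i j' x hx
        have hCefx : ∀ i₀ j₀, ∀ x₀ ∈ C j₀, α * v i₀ ((C j₀).erase x₀) ≤ v i₀ (C i₀) :=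
          fun i₀ j₀ x₀ hx₀ => (hefx i₀ (σ j₀) x₀ hx₀).trans (hσle i₀)
        by_cases h2 : j' = j
        · subst h2
          simp only [hA', if_pos rfl] at hx ⊢
          by_cases hxa : x = a
          · subst hxa
            rw [Finset.erase_insert (hanotC j')]
            have h3 : 0 ≤ v i (C j') := hvnonneg i _ (hCsubM j')
            have h4 : v i (C j') ≤ v i (C i) := hj i
            have h8 : v i (C i) ≤ v i (A' i) := hCle i
            nlinarith
          · have hxC : x ∈ C j' := (Finset.mem_insert.mp hx).resolve_left hxa
            rw [Finset.erase_insert_of_ne (Ne.symm hxa)]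
            have hsum1 : v i (insert a ((C j').erase x)) =
                w i a + v i ((C j').erase x) := by
              simp only [hv]
              rw [Finset.sum_insert (fun hc => hanotC j' (Finset.erase_subset _ _ hc))]
            have hE : v i ((C j').erase x) ≤ v i (C j') :=
              hverase i (C j') x (hCsubM j') hxC
            have h4 : v i (C j') ≤ v i (C i) := hj i
            have h5 : (k:ℝ) * w i a ≤ (k:ℝ) * w i glast :=
              mul_le_mul_of_nonneg_left (hwa i) (by positivity)
            have h6 : (k:ℝ) * w i a ≤ v i (C i) := h5.trans (hflC i)
            have h7 : 0 ≤ w i a := hw i a haM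
            have h8 : v i (C i) ≤ v i (A' i) := hCle i
            have hE2 : v i ((C j').erase x) ≤ v i (C i) := hE.trans h4
            rw [hsum1, hα, div_mul_eq_mul_div, div_le_iff₀ hkpos]
            nlinarith [mul_le_mul_of_nonneg_left hE2 (by positivity : (0:ℝ) ≤ (k:ℝ)),
              mul_le_mul_of_nonneg_left h8 (le_of_lt hkpos)]
        · simp only [hA', if_neg h2] at hx ⊢
          exact (hCefx i j' x hx).trans (hCle i)
  obtain ⟨A, hsub, hcov, hdis, -, hefx⟩ := claim2 (M \ G ℓ) (Finset.Subset.refl _)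
  have hMeq : G ℓ ∪ (M \ G ℓ) = M := Finset.union_sdiff_of_subset (hGsub ℓ)
  rw [hMeq] at hsub hcov
  exact ⟨A, hsub, hcov, hdis, fun i j x hx => hefx i j x hx⟩
end

section
/- Let n agents have additive valuations over a finite set M of m items, and suppose that for some ℓ with 1 ≤ ℓ ≤ m there exists a set L ⊆ M with |L| = ℓ such that: (i) for every agent i, every g ∈ L and every h ∈ M \ L, v_i({g}) ≥ v_i({h}); and (ii) for every agent i there exists x_i > 0 with x_i ≤ v_i({g}) ≤ 2·x_i for every g ∈ L (all agents value their top ℓ items within an interval of the form [x, 2x]). Then, with k = ⌊ℓ/n⌋, there exists a complete allocation of M that is k/(k+1)-EFX. -/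
section EFXAux


private lemma rot_aux {n : ℕ} (val : Fin n → Fin n → ℝ)
    (σ : Equiv.Perm (Fin n))
    (hσmax : ∀ x' ∈ Finset.univ.filter
      (fun σ : Equiv.Perm (Fin n) => ∀ i, val i i ≤ val i (σ i)),
      ∑ i, val i (x' i) ≤ ∑ i, val i (σ i))
    (hσmem : ∀ i, val i i ≤ val i (σ i))
    (p : Fin n → Fin n)
    (hp : ∀ j, val (p j) (σ (p j)) < val (p j) (σ j))
    (z : Fin n) (a b : ℕ) (hab : a < b) (heq : p^[a] z = p^[b] z) : False := by
  classical
  set u : Fin n := p^[a] z with hu_def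
  set m : ℕ := b - a with hm_def
  have hm : 0 < m := Nat.sub_pos_of_lt hab
  have hmu : p^[m] u = u := by
    have : p^[m] (p^[a] z) = p^[m + a] z := (Function.iterate_add_apply p m a z).symm
    rw [hu_def, this, Nat.sub_add_cancel hab.le, ← heq]
  set Cset : Finset (Fin n) := (Finset.range m).image (fun s => p^[s] u) with hC_def
  have hu : u ∈ Cset := by
    refine Finset.mem_image.2 ⟨0, Finset.mem_range.2 hm, rfl⟩
  have hall : ∀ t : ℕ, p^[t] u ∈ Cset := by
    intro t
    have hdecomp : p^[t] u = p^[t % m] u := by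
      conv_lhs => rw [← Nat.mod_add_div t m, Function.iterate_add_apply,
        Function.iterate_mul]
      rw [Function.iterate_fixed hmu]
    rw [hdecomp]
    exact Finset.mem_image.2 ⟨t % m, Finset.mem_range.2 (Nat.mod_lt _ hm), rfl⟩
  have hiter : ∀ c ∈ Cset, ∀ t : ℕ, p^[t] c ∈ Cset := by
    intro c hc t
    obtain ⟨s, _, rfl⟩ := Finset.mem_image.1 hc
    rw [← Function.iterate_add_apply]
    exact hall _
  have hfix : ∀ c ∈ Cset, p^[m] c = c := by
    intro c hc
    obtain ⟨s, _, rfl⟩ := Finset.mem_image.1 hc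
    rw [← Function.iterate_add_apply, add_comm, Function.iterate_add_apply, hmu]
  set q : Fin n → Fin n := fun c => p^[m-1] c with hq_def
  have hq1 : ∀ c ∈ Cset, q c ∈ Cset := fun c hc => hiter c hc _
  have hq2 : ∀ c ∈ Cset, p (q c) = c := by
    intro c hc
    have : p (p^[m-1] c) = p^[m-1+1] c := (Function.iterate_succ_apply' p _ c).symm
    rw [hq_def, this, Nat.sub_add_cancel hm, hfix c hc]
  set ρ : Fin n → Fin n := fun j => if j ∈ Cset then q j else j with hρ_def
  have hρinj : Function.Injective ρ := by
    intro c d hcd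
    simp only [hρ_def] at hcd
    by_cases hc : c ∈ Cset <;> by_cases hd : d ∈ Cset <;> simp [hc, hd] at hcd
    · have := congrArg p hcd
      rwa [hq2 c hc, hq2 d hd] at this
    · exact absurd (hcd ▸ hq1 c hc) hd
    · exact absurd (hcd ▸ hq1 d hd) hc
    · exact hcd
  have hρbij := Finite.injective_iff_bijective.mp hρinj
  set σ' : Equiv.Perm (Fin n) := (Equiv.ofBijective ρ hρbij).trans σ with hσ'_def
  have hσ'app : ∀ i, σ' i = σ (ρ i) := fun i => rfl
  have hstrict : ∀ i ∈ Cset, val i (σ i) < val i (σ' i) := by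
    intro i hi
    have h1 := hp (q i)
    rw [hq2 i hi] at h1
    rw [hσ'app]
    simpa [hρ_def, hi] using h1
  have hσ'mem : ∀ i, val i i ≤ val i (σ' i) := by
    intro i
    by_cases hi : i ∈ Cset
    · exact (hσmem i).trans (hstrict i hi).le
    · rw [hσ'app]; simp only [hρ_def, hi, if_neg, ite_false]; exact hσmem i
  have hlt : ∑ i, val i (σ i) < ∑ i, val i (σ' i) := by
    refine Finset.sum_lt_sum (fun i _ => ?_) ⟨u, Finset.mem_univ u, hstrict u hu⟩
    by_cases hi : i ∈ Cset
    · exact (hstrict i hi).le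
    · rw [hσ'app]; simp only [hρ_def, hi, ite_false]; exact le_refl _
  have := hσmax σ' (by simpa using hσ'mem)
  linarith

private lemma rotate_lemma {n : ℕ} (hn : 0 < n) (val : Fin n → Fin n → ℝ) :
    ∃ σ : Equiv.Perm (Fin n), (∀ i, val i i ≤ val i (σ i)) ∧
      ∃ j, ∀ i, val i (σ j) ≤ val i (σ i) := by
  classical
  have hne : (Finset.univ.filter
      (fun σ : Equiv.Perm (Fin n) => ∀ i, val i i ≤ val i (σ i))).Nonempty :=
    ⟨1, by simp⟩
  obtain ⟨σ, hσmem, hσmax⟩ := Finset.exists_max_image _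
    (fun σ : Equiv.Perm (Fin n) => ∑ i, val i (σ i)) hne
  simp only [Finset.mem_filter, Finset.mem_univ, true_and] at hσmem
  refine ⟨σ, hσmem, ?_⟩
  by_contra hno
  push_neg at hno
  have hp : ∀ j : Fin n, ∃ i : Fin n, val i (σ i) < val i (σ j) := by
    intro j; obtain ⟨i, hi⟩ := hno j; exact ⟨i, by linarith⟩
  choose p hp using hp
  have z : Fin n := ⟨0, hn⟩
  obtain ⟨a, b, hab, heq⟩ := Fintype.exists_ne_map_eq_of_card_lt
    (fun s : Fin (n+1) => p^[(s : ℕ)] z) (by simp)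
  have hab' : (a : ℕ) ≠ (b : ℕ) := fun h => hab (by ext; exact h)
  rcases lt_or_gt_of_ne hab' with hlt | hlt
  · exact rot_aux val σ hσmax hσmem p hp z a b hlt heq
  · exact rot_aux val σ hσmax hσmem p hp z b a hlt heq.symm


private lemma round_lemma {ι : Type*} [DecidableEq ι] {n : ℕ}
    (w : Fin n → ι → ℝ) (d : ι) (S : Finset ι) (T : Finset (Fin n)) (hST : T.card ≤ S.card) :
    ∃ c : Fin n → ι, Set.InjOn c T ∧ (∀ i ∈ T, c i ∈ S) ∧
      (∀ i ∈ T, ∀ h ∈ S, h ∉ T.image c → w i h ≤ w i (c i)) := by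
  classical
  induction T using Finset.induction_on with
  | empty => exact ⟨fun _ => d, by simp [Set.InjOn], by simp, by simp⟩
  | @insert a T' ha ih =>
    obtain ⟨c, hinj, hmem, hmax⟩ := ih (le_trans (by simp [Finset.card_insert_of_notMem ha]) hST)
    have hcard : (T'.image c).card < S.card := by
      calc (T'.image c).card ≤ T'.card := Finset.card_image_le
        _ < (insert a T').card := by simp [Finset.card_insert_of_notMem ha]
        _ ≤ S.card := hST
    have hne : (S \ T'.image c).Nonempty := by
      rw [← Finset.card_pos]
      have : (S \ T'.image c).card ≥ S.card - (T'.image c).card := by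
        exact Finset.le_card_sdiff _ _
      omega
    obtain ⟨g, hgmem, hgmax⟩ := Finset.exists_max_image _ (w a) hne
    have hgS : g ∈ S := (Finset.mem_sdiff.1 hgmem).1
    have hgni : g ∉ T'.image c := (Finset.mem_sdiff.1 hgmem).2
    have hne' : ∀ {x : Fin n}, x ∈ T' → x ≠ a := fun hx h => ha (h ▸ hx)
    refine ⟨Function.update c a g, ?_, ?_, ?_⟩
    · intro i hi j hj hij
      simp only [Finset.coe_insert, Set.mem_insert_iff] at hi hj
      rcases hi with rfl | hi <;> rcases hj with rfl | hj
      · rfl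
      · exfalso
        rw [Function.update_self, Function.update_of_ne (hne' hj)] at hij
        exact hgni (Finset.mem_image.2 ⟨j, hj, hij.symm⟩)
      · exfalso
        rw [Function.update_self, Function.update_of_ne (hne' hi)] at hij
        exact hgni (Finset.mem_image.2 ⟨i, hi, hij⟩)
      · rw [Function.update_of_ne (hne' hi),
          Function.update_of_ne (hne' hj)] at hij
        exact hinj hi hj hij
    · intro i hi
      rcases Finset.mem_insert.1 hi with rfl | hi
      · rw [Function.update_self]; exact hgS
      · rw [Function.update_of_ne (hne' hi)]; exact hmem i hi
    · intro i hi h hh hhim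
      have him : (insert a T').image (Function.update c a g)
          = insert g (T'.image c) := by
        rw [Finset.image_insert, Function.update_self]
        congr 1
        apply Finset.image_congr
        intro x hx
        exact Function.update_of_ne (hne' hx) _ _
      rw [him, Finset.mem_insert] at hhim
      push_neg at hhim
      rcases Finset.mem_insert.1 hi with rfl | hi
      · rw [Function.update_self]
        exact hgmax h (Finset.mem_sdiff.2 ⟨hh, hhim.2⟩)
      · rw [Function.update_of_ne (hne' hi)]
        exact hmax i hi h hh hhim.2

private lemma phase1_lemma {ι : Type*} [DecidableEq ι] {n : ℕ} (hn : 0 < n)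
    (w : Fin n → ι → ℝ) (d : ι) (k' : ℕ) (S : Finset ι) (hcard : S.card = k' * n) :
    ∃ P : Fin n → Finset ι,
      (∀ i, P i ⊆ S) ∧ (∀ i, (P i).card = k') ∧
      (∀ i j, i ≠ j → Disjoint (P i) (P j)) ∧ (∀ g ∈ S, ∃ i, g ∈ P i) ∧
      (k' = 0 ∨ ∃ f t : Fin n → ι, (∀ j, f j ∈ P j) ∧ (∀ j, t j ∈ P j) ∧
        ∀ i j, (∑ y ∈ P j, w i y) - w i (f j) ≤ (∑ y ∈ P i, w i y) - w i (t i)) := by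
  classical
  induction k' generalizing S with
  | zero =>
    have : S = ∅ := Finset.card_eq_zero.1 (by simpa using hcard)
    subst this
    exact ⟨fun _ => ∅, by simp, by simp, by simp, by simp, Or.inl rfl⟩
  | succ k' ih =>
    have hTS : (Finset.univ : Finset (Fin n)).card ≤ S.card := by
      simp only [Finset.card_univ, Fintype.card_fin, hcard]
      nlinarith
    obtain ⟨c, hinj, hmem, hmax⟩ := round_lemma w d S Finset.univ hTS
    set S' : Finset ι := S \ Finset.univ.image c with hS'def
    have himcard : (Finset.univ.image c).card = n := by
      rw [Finset.card_image_of_injOn (by simpa using hinj)]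
      simp
    have himsub : Finset.univ.image c ⊆ S := by
      intro g hg
      obtain ⟨i, _, rfl⟩ := Finset.mem_image.1 hg
      exact hmem i (Finset.mem_univ i)
    have hS'card : S'.card = k' * n := by
      rw [hS'def, Finset.card_sdiff_of_subset himsub, himcard, hcard]
      ring_nf
      omega
    obtain ⟨P', hsub', hcard', hdis', hcov', hinv'⟩ := ih S' hS'card
    have hciS' : ∀ i, c i ∉ S' := by
      intro i
      simp only [hS'def, Finset.mem_sdiff, not_and, not_not]
      intro _
      exact Finset.mem_image.2 ⟨i, Finset.mem_univ i, rfl⟩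
    have hciP' : ∀ i j, c i ∉ P' j := fun i j h => hciS' i (hsub' j h)
    refine ⟨fun i => insert (c i) (P' i), ?_, ?_, ?_, ?_, ?_⟩
    · intro i g hg
      rcases Finset.mem_insert.1 hg with rfl | hg
      · exact hmem i (Finset.mem_univ i)
      · exact (Finset.sdiff_subset) (hsub' i hg)
    · intro i
      rw [Finset.card_insert_of_notMem (hciP' i i), hcard' i]
    · intro i j hij
      rw [Finset.disjoint_left]
      intro g hg hg'
      rcases Finset.mem_insert.1 hg with rfl | hg
      · rcases Finset.mem_insert.1 hg' with heq | hg'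
        · exact hij (hinj (Finset.mem_coe.2 (Finset.mem_univ i)) (Finset.mem_coe.2 (Finset.mem_univ j)) heq)
        · exact hciP' i j hg'
      · rcases Finset.mem_insert.1 hg' with heq | hg'
        · exact hciP' j i (heq ▸ hg)
        · exact Finset.disjoint_left.1 (hdis' i j hij) hg hg'
    · intro g hg
      by_cases hgim : g ∈ Finset.univ.image c
      · obtain ⟨i, _, rfl⟩ := Finset.mem_image.1 hgim
        exact ⟨i, Finset.mem_insert_self _ _⟩
      · obtain ⟨i, hi⟩ := hcov' g (Finset.mem_sdiff.2 ⟨hg, hgim⟩)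
        exact ⟨i, Finset.mem_insert_of_mem hi⟩
    · right
      rcases hinv' with hk0 | ⟨f', t', hf', ht', hineq'⟩
      · -- k' = 0 : P' i = ∅, bundles are singletons {c i}
        refine ⟨c, c, fun j => Finset.mem_insert_self _ _, fun j => Finset.mem_insert_self _ _, ?_⟩
        intro i j
        have hP'e : ∀ i, P' i = ∅ := fun i => Finset.card_eq_zero.1 (by rw [hcard' i, hk0])
        simp [hP'e, Finset.sum_insert, hciP']
      · refine ⟨c, t', fun j => Finset.mem_insert_self _ _,
          fun j => Finset.mem_insert_of_mem (ht' j), ?_⟩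
        intro i j
        have hsum : ∀ a b : Fin n, ∑ y ∈ insert (c a) (P' b), w i y
            = w i (c a) + ∑ y ∈ P' b, w i y := by
          intro a b
          exact Finset.sum_insert (hciP' a b)
        have hfle : w i (f' j) ≤ w i (c i) := by
          apply hmax i (Finset.mem_univ i) (f' j) (Finset.sdiff_subset (hsub' j (hf' j)))
          exact (Finset.mem_sdiff.1 (hsub' j (hf' j))).2
        have h1 := hineq' i j
        rw [hsum j j, hsum i i]
        calc w i (c j) + ∑ y ∈ P' j, w i y - w i (c j)
            = ((∑ y ∈ P' j, w i y) - w i (f' j)) + w i (f' j) := by ring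
          _ ≤ ((∑ y ∈ P' i, w i y) - w i (t' i)) + w i (c i) := by
              exact add_le_add h1 hfle
          _ = w i (c i) + ∑ y ∈ P' i, w i y - w i (t' i) := by ring

private lemma stage_lemma {ι : Type*} [DecidableEq ι] {n : ℕ} (hn : 0 < n)
    (w : Fin n → ι → ℝ) (cap : Fin n → ℝ)
    (B0 : Fin n → Finset ι) (base : Finset ι)
    (hsub : ∀ i, B0 i ⊆ base) (hcov : ∀ g ∈ base, ∃ i, g ∈ B0 i)
    (hdis : ∀ i j, i ≠ j → Disjoint (B0 i) (B0 j))
    (R : Finset ι) (hRb : Disjoint R base)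
    (hcapR : ∀ i, ∀ h ∈ R, w i h ≤ cap i)
    (hwR : ∀ i, ∀ h ∈ R, 0 ≤ w i h) :
    ∃ B : Fin n → Finset ι,
      (∀ i, B i ⊆ base ∪ R) ∧ (∀ g ∈ base ∪ R, ∃ i, g ∈ B i) ∧
      (∀ i j, i ≠ j → Disjoint (B i) (B j)) ∧
      (∀ i, ∑ y ∈ B0 i, w i y ≤ ∑ y ∈ B i, w i y) ∧
      (∀ j, (∃ j', B j = B0 j') ∨
        (∀ i, ∑ y ∈ B j, w i y ≤ (∑ y ∈ B i, w i y) + cap i)) := by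
  classical
  induction R using Finset.induction_on with
  | empty =>
    refine ⟨B0, by simpa using hsub, by simpa using hcov, hdis, fun i => le_refl _, ?_⟩
    exact fun j => Or.inl ⟨j, rfl⟩
  | @insert h R hhR ihR =>
    have hRb' : Disjoint R base := (Finset.disjoint_insert_left.1 hRb).2
    have hhbase : h ∉ base := (Finset.disjoint_insert_left.1 hRb).1
    obtain ⟨B, hBsub, hBcov, hBdis, hBmono, hBstat⟩ :=
      ihR hRb' (fun i g hg => hcapR i g (Finset.mem_insert_of_mem hg))
        (fun i g hg => hwR i g (Finset.mem_insert_of_mem hg))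
    obtain ⟨σ, hσ1, j₀, hj₀⟩ := rotate_lemma hn (fun i j => ∑ y ∈ B j, w i y)
    set C : Fin n → Finset ι := fun i => B (σ i) with hCdef
    have hCsub : ∀ i, C i ⊆ base ∪ R := fun i => hBsub (σ i)
    have hhC : ∀ i, h ∉ C i := by
      intro i hmem
      rcases Finset.mem_union.1 (hCsub i hmem) with hc | hc
      · exact hhbase hc
      · exact hhR hc
    set B' : Fin n → Finset ι := Function.update C j₀ (insert h (C j₀)) with hB'def
    have hB'j₀ : B' j₀ = insert h (C j₀) := Function.update_self _ _ _
    have hB'ne : ∀ i, i ≠ j₀ → B' i = C i := fun i hi => Function.update_of_ne hi _ _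
    have hB'sup : ∀ i, C i ⊆ B' i := by
      intro i
      by_cases hi : i = j₀
      · rw [hi, hB'j₀]; exact Finset.subset_insert _ _
      · rw [hB'ne i hi]
    have hsumC : ∀ i j, (∑ y ∈ C j, w i y) = ∑ y ∈ B (σ j), w i y := fun _ _ => rfl
    have hsumB' : ∀ i, ∑ y ∈ B' j₀, w i y = w i h + ∑ y ∈ C j₀, w i y := by
      intro i
      rw [hB'j₀, Finset.sum_insert (hhC j₀)]
    have hwh : ∀ i, 0 ≤ w i h := fun i => hwR i h (Finset.mem_insert_self _ _)
    have hsummono : ∀ i j, (∑ y ∈ C j, w i y) ≤ ∑ y ∈ B' j, w i y := by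
      intro i j
      by_cases hj : j = j₀
      · rw [hj, hsumB' i]; linarith [hwh i]
      · rw [hB'ne j hj]
    have hmono2 : ∀ i, (∑ y ∈ B i, w i y) ≤ ∑ y ∈ B' i, w i y :=
      fun i => le_trans (hσ1 i) (hsummono i i)
    refine ⟨B', ?_, ?_, ?_, fun i => le_trans (hBmono i) (hmono2 i), ?_⟩
    · intro i g hg
      by_cases hi : i = j₀
      · rw [hi, hB'j₀] at hg
        rcases Finset.mem_insert.1 hg with rfl | hg
        · exact Finset.mem_union_right _ (Finset.mem_insert_self _ _)
        · rcases Finset.mem_union.1 (hCsub j₀ hg) with hc | hc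
          · exact Finset.mem_union_left _ hc
          · exact Finset.mem_union_right _ (Finset.mem_insert_of_mem hc)
      · rw [hB'ne i hi] at hg
        rcases Finset.mem_union.1 (hCsub i hg) with hc | hc
        · exact Finset.mem_union_left _ hc
        · exact Finset.mem_union_right _ (Finset.mem_insert_of_mem hc)
    · intro g hg
      rcases Finset.mem_union.1 hg with hc | hc
      · obtain ⟨i, hi⟩ := hBcov g (Finset.mem_union_left _ hc)
        exact ⟨σ.symm i, hB'sup _ (by simp [hCdef, Equiv.apply_symm_apply, hi])⟩
      · rcases Finset.mem_insert.1 hc with rfl | hc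
        · exact ⟨j₀, hB'j₀ ▸ Finset.mem_insert_self _ _⟩
        · obtain ⟨i, hi⟩ := hBcov g (Finset.mem_union_right _ hc)
          exact ⟨σ.symm i, hB'sup _ (by simp [hCdef, Equiv.apply_symm_apply, hi])⟩
    · intro i j hij
      have hCdis : Disjoint (C i) (C j) := hBdis _ _ (fun he => hij (σ.injective he))
      by_cases hi : i = j₀
      · have hji : j ≠ j₀ := fun he => hij (hi.trans he.symm)
        rw [hi, hB'j₀, hB'ne j hji]
        have hCdis' : Disjoint (C j₀) (C j) := hBdis _ _ (fun he => hji (σ.injective he).symm)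
        exact Finset.disjoint_insert_left.2 ⟨hhC j, hCdis'⟩
      · by_cases hj : j = j₀
        · rw [hB'ne i hi, hj, hB'j₀]
          have hCdis' : Disjoint (C i) (C j₀) := hBdis _ _ (fun he => hi (σ.injective he))
          exact Finset.disjoint_insert_right.2 ⟨hhC i, hCdis'⟩
        · rw [hB'ne i hi, hB'ne j hj]; exact hCdis
    · intro j
      by_cases hj : j = j₀
      · right
        intro i
        rw [hj, hsumB' i]
        have h1 : (∑ y ∈ C j₀, w i y) ≤ ∑ y ∈ C i, w i y := hj₀ i
        have h2 : w i h ≤ cap i := hcapR i h (Finset.mem_insert_self _ _)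
        have h3 : (∑ y ∈ C i, w i y) ≤ ∑ y ∈ B' i, w i y := hsummono i i
        linarith
      · rcases hBstat (σ j) with ⟨j', hj'⟩ | hcapd
        · left
          exact ⟨j', by rw [hB'ne j hj]; exact hj'⟩
        · right
          intro i
          rw [hB'ne j hj]
          have h1 : (∑ y ∈ B (σ j), w i y) ≤ (∑ y ∈ B i, w i y) + cap i := hcapd i
          have h2 : (∑ y ∈ B i, w i y) ≤ ∑ y ∈ B' i, w i y := hmono2 i
          exact le_trans h1 (by linarith)

end EFXAux

/-- Relaxed bounded interval: if all agents agree on the set `L` of the top `ℓ` items and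
each agent values all items of `L` within an interval of the form `[x, 2x]`, then with
`k = ⌊ℓ/n⌋` a `k/(k+1)`-EFX complete allocation exists. -/
theorem efx_relaxed_bounded_interval {ι : Type*} [DecidableEq ι] (n : ℕ) (hn : 1 ≤ n)
    (M : Finset ι) (w : Fin n → ι → ℝ)
    (hw : ∀ i, ∀ g ∈ M, 0 ≤ w i g)
    (ℓ : ℕ) (hℓ1 : 1 ≤ ℓ) (hℓm : ℓ ≤ M.card)
    (L : Finset ι) (hLM : L ⊆ M) (hLcard : L.card = ℓ)
    (htop : ∀ i, ∀ g ∈ L, ∀ h ∈ M \ L, w i h ≤ w i g)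
    (hinterval : ∀ i, ∃ x : ℝ, 0 < x ∧ ∀ g ∈ L, x ≤ w i g ∧ w i g ≤ 2 * x) :
    ∃ A : Fin n → Finset ι,
      (∀ i, A i ⊆ M) ∧
      (∀ x ∈ M, ∃ i, x ∈ A i) ∧
      (∀ i j, i ≠ j → Disjoint (A i) (A j)) ∧
      (∀ i j, ∀ x ∈ A j,
        ((ℓ / n : ℕ) : ℝ) / (((ℓ / n : ℕ) : ℝ) + 1) * ∑ y ∈ (A j).erase x, w i y
          ≤ ∑ y ∈ A i, w i y) := by
  classical
  have hn' : 0 < n := hn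
  by_cases hk0 : ℓ / n = 0
  · -- trivial allocation: everything to agent 0
    refine ⟨fun i => if i = (⟨0, hn'⟩ : Fin n) then M else ∅, ?_, ?_, ?_, ?_⟩
    · intro i; by_cases hi : i = (⟨0, hn'⟩ : Fin n) <;> simp [hi]
    · intro g hg; exact ⟨⟨0, hn'⟩, by simp [hg]⟩
    · intro i j hij
      by_cases hi : i = (⟨0, hn'⟩ : Fin n)
      · have hj : ¬ (j = (⟨0, hn'⟩ : Fin n)) := fun h => hij (hi.trans h.symm)
        simp [hi, hj]
      · simp [hi]
    · intro i j g hg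
      rw [hk0]
      simp only [Nat.cast_zero, zero_add, zero_div, zero_mul]
      apply Finset.sum_nonneg
      intro y hy
      by_cases hi : i = (⟨0, hn'⟩ : Fin n)
      · rw [if_pos hi] at hy; exact hw i y hy
      · rw [if_neg hi] at hy; exact absurd hy (Finset.notMem_empty y)
  · -- main construction
    set k : ℕ := ℓ / n with hkdef
    have hk1 : 1 ≤ k := Nat.pos_of_ne_zero hk0
    have hLne : L.Nonempty := Finset.card_pos.1 (by omega)
    choose x hxpos hxint using hinterval
    obtain ⟨d, hd⟩ := hLne
    have hμex : ∀ i : Fin n, ∃ g ∈ L, ∀ g' ∈ L, w i g ≤ w i g' :=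
      fun i => L.exists_min_image (w i) ⟨d, hd⟩
    choose gm hgmL hgmmin using hμex
    set μ : Fin n → ℝ := fun i => w i (gm i) with hμdef
    have hμx : ∀ i, x i ≤ μ i := fun i => (hxint i (gm i) (hgmL i)).1
    have hμ2x : ∀ i, μ i ≤ 2 * x i := fun i => (hxint i (gm i) (hgmL i)).2
    have hμpos : ∀ i, 0 < μ i := fun i => lt_of_lt_of_le (hxpos i) (hμx i)
    have hμle : ∀ i, ∀ g ∈ L, μ i ≤ w i g := fun i => hgmmin i
    have hjunk : ∀ i, ∀ h ∈ M \ L, w i h ≤ μ i :=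
      fun i h hh => htop i (gm i) (hgmL i) h hh
    have hwL : ∀ i, ∀ g ∈ L, w i g ≤ 2 * x i := fun i g hg => (hxint i g hg).2
    -- choose L' ⊆ L of size k * n
    have hkn : k * n ≤ L.card := by
      rw [hLcard]; exact Nat.div_mul_le_self ℓ n
    obtain ⟨L', hL'sub, hL'card⟩ := Finset.exists_subset_card_eq hkn
    -- phase 1
    obtain ⟨P, hPsub, hPcard, hPdis, hPcov, hPinv⟩ := phase1_lemma hn' w d k L' hL'card
    have hPL : ∀ i, P i ⊆ L := fun i => (hPsub i).trans hL'sub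
    rcases hPinv with h0 | ⟨f, t, hf, ht, hinv⟩
    · omega
    have hQ3 : ∀ i j, ∀ g ∈ P j,
        ∑ y ∈ (P j).erase g, w i y ≤ ∑ y ∈ P i, w i y := by
      intro i j g hg
      have he : ∑ y ∈ (P j).erase g, w i y + w i g = ∑ y ∈ P j, w i y :=
        Finset.sum_erase_add _ _ hg
      have h1 := hinv i j
      have h2 : w i (f j) ≤ 2 * x i := hwL i _ (hPL j (hf j))
      have h3 : μ i ≤ w i (t i) := hμle i _ (hPL i (ht i))
      have h4 : μ i ≤ w i g := hμle i _ (hPL j hg)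
      have h5 : x i ≤ μ i := hμx i
      linarith
    have hPμ : ∀ i, (k : ℝ) * μ i ≤ ∑ y ∈ P i, w i y := by
      intro i
      have := Finset.card_nsmul_le_sum (P i) (w i) (μ i)
        (fun g hg => hμle i g (hPL i hg))
      rwa [hPcard i, nsmul_eq_mul] at this
    -- stage A : distribute leftover L items
    have hunion1 : L' ∪ (L \ L') = L := Finset.union_sdiff_of_subset hL'sub
    obtain ⟨B1, hB1sub, hB1cov, hB1dis, hB1mono, hB1stat⟩ :=
      stage_lemma hn' w (fun i => 2 * x i) P L' hPsub hPcov hPdis (L \ L')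
        Finset.sdiff_disjoint
        (fun i h hh => hwL i h (Finset.mem_sdiff.1 hh).1)
        (fun i h hh => hw i h (hLM (Finset.mem_sdiff.1 hh).1))
    rw [hunion1] at hB1sub hB1cov
    -- stage B : distribute the junk
    have hunion2 : L ∪ (M \ L) = M := Finset.union_sdiff_of_subset hLM
    obtain ⟨B2, hB2sub, hB2cov, hB2dis, hB2mono, hB2stat⟩ :=
      stage_lemma hn' w μ B1 L hB1sub hB1cov hB1dis (M \ L)
        Finset.sdiff_disjoint
        (fun i h hh => hjunk i h hh)
        (fun i h hh => hw i h (Finset.mem_sdiff.1 hh).1)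
    rw [hunion2] at hB2sub hB2cov
    refine ⟨B2, hB2sub, hB2cov, hB2dis, ?_⟩
    intro i j g hg
    -- value lower bounds
    have hVP : ∑ y ∈ P i, w i y ≤ ∑ y ∈ B2 i, w i y :=
      le_trans (hB1mono i) (hB2mono i)
    have hAige : (k : ℝ) * μ i ≤ ∑ y ∈ B2 i, w i y := le_trans (hPμ i) hVP
    have hknn : (0 : ℝ) ≤ (k : ℝ) := Nat.cast_nonneg k
    have hV0 : 0 ≤ ∑ y ∈ B2 i, w i y :=
      le_trans (mul_nonneg hknn (hμpos i).le) hAige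
    -- key bound
    have hS : ∑ y ∈ (B2 j).erase g, w i y ≤ (∑ y ∈ B2 i, w i y) + μ i := by
      rcases hB2stat j with ⟨j', hj'⟩ | hcap2
      · rcases hB1stat j' with ⟨j'', hj''⟩ | hcap1
        · -- B2 j = P j''
          have hBP : B2 j = P j'' := hj'.trans hj''
          rw [hBP] at hg ⊢
          exact le_trans (hQ3 i j'' g hg) (le_trans hVP (by linarith [hμpos i]))
        · -- B2 j = B1 j' ⊆ L
          have hBL : B2 j ⊆ L := hj' ▸ hB1sub j'
          have hgL : μ i ≤ w i g := hμle i g (hBL hg)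
          have he : ∑ y ∈ (B2 j).erase g, w i y + w i g = ∑ y ∈ B2 j, w i y :=
            Finset.sum_erase_add _ _ hg
          have h1 : ∑ y ∈ B2 j, w i y ≤ (∑ y ∈ B1 i, w i y) + 2 * x i := by
            rw [hj']; exact hcap1 i
          have h2 : ∑ y ∈ B1 i, w i y ≤ ∑ y ∈ B2 i, w i y := hB2mono i
          have h3 : μ i ≤ 2 * x i := hμ2x i
          have h4 : x i ≤ μ i := hμx i
          linarith
      · -- capped by μ
        have h1 : ∑ y ∈ B2 j, w i y ≤ (∑ y ∈ B2 i, w i y) + μ i := hcap2 i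
        have h2 : ∑ y ∈ (B2 j).erase g, w i y ≤ ∑ y ∈ B2 j, w i y := by
          apply Finset.sum_le_sum_of_subset_of_nonneg (Finset.erase_subset _ _)
          intro y hy _
          exact hw i y (hB2sub j hy)
        linarith
    -- conclude
    have hkcast : ((ℓ / n : ℕ) : ℝ) = (k : ℝ) := by rw [hkdef]
    rw [hkcast]
    have hpos : (0 : ℝ) < (k : ℝ) + 1 := by positivity
    rw [div_mul_eq_mul_div, div_le_iff₀ hpos]
    have h1 : (k : ℝ) * (∑ y ∈ (B2 j).erase g, w i y)
        ≤ (k : ℝ) * ((∑ y ∈ B2 i, w i y) + μ i) :=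
      mul_le_mul_of_nonneg_left hS hknn
    nlinarith [hAige, hV0]
end

section
/- Let n agents have additive valuations over a finite set M of items, and suppose each agent i has a favorite item f_i ∈ M (i.e., v_i({f_i}) ≥ v_i({g}) for every g ∈ M) such that the items f_1,...,f_n are pairwise distinct. Then there exists a complete allocation of M that is 2/3-EFX. -/
/-!
Start with every agent holding its favourite item and all other items in a pool, and move pool
items to bundles one at a time, keeping every agent's value of any other bundle minus one item at
most `3/2` times its own value. While some agent still holds only its favourite, give it its best
pool item: every other agent values each of the two items at most as much as its own favourite.
Otherwise every agent values its bundle at least twice any pool item; after rotating bundles along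
envy cycles some bundle is envied by nobody, and adding a pool item to it raises anyone's value
of it by at most half of their own bundle.
-/

open Finset Function

theorem Function.nonempty_periodicPts {α : Type*} [Finite α] [Nonempty α] (h : α → α) :
    (periodicPts h).Nonempty := by
  obtain ⟨a, b, hne, heq⟩ :=
    Finite.exists_ne_map_eq_of_infinite fun k : ℕ => h^[k] (Classical.arbitrary α)
  wlog hab : a < b generalizing a b
  · exact this b a hne.symm heq.symm (hne.lt_or_gt.resolve_left hab)
  refine ⟨h^[a] (Classical.arbitrary α), b - a, Nat.sub_pos_of_lt hab, ?_⟩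
  rw [IsPeriodicPt, IsFixedPt, ← iterate_add_apply, Nat.sub_add_cancel hab.le]
  exact heq.symm

theorem Function.exists_perm_eq_self_or_eq {α : Type*} [Finite α] [Nonempty α] (h : α → α) :
    ∃ τ : Equiv.Perm α, (∀ a, τ a = a ∨ τ a = h a) ∧ ∃ a, τ a = h a := by
  classical
  let τ : Equiv.Perm α := Equiv.Perm.ofSubtype ((bijOn_periodicPts h).equiv h)
  have hτ : ∀ a ∈ periodicPts h, τ a = h a := fun a ha => Equiv.Perm.ofSubtype_apply_of_mem _ ha
  obtain ⟨a, ha⟩ := nonempty_periodicPts h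
  refine ⟨τ, fun b => ?_, a, hτ a ha⟩
  by_cases hb : b ∈ periodicPts h
  · exact Or.inr (hτ b hb)
  · exact Or.inl (Equiv.Perm.ofSubtype_apply_of_not_mem _ hb)

/-- `u i k` is the value of agent `i` for the bundle of agent `k`. Among the permutations that
improve everyone take one of maximal total value: if every bundle were envied, rotating bundles
along an envy cycle would increase the total. -/
theorem exists_perm_le_and_unenvied {α β : Type*} [Fintype α] [Nonempty α] [AddCommMonoid β]
    [LinearOrder β] [IsOrderedCancelAddMonoid β] (u : α → α → β) :
    ∃ π : Equiv.Perm α, (∀ i, u i i ≤ u i (π i)) ∧ ∃ s, ∀ j, u j (π s) ≤ u j (π j) := by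
  classical
  set T := univ.filter fun π : Equiv.Perm α => ∀ i, u i i ≤ u i (π i)
  obtain ⟨π, hπ, hmax⟩ := T.exists_max_image (fun π => ∑ i, u i (π i)) ⟨1, by simp [T]⟩
  rw [mem_filter] at hπ
  refine ⟨π, hπ.2, ?_⟩
  by_contra! henvied
  choose h hh using henvied
  obtain ⟨τ, hτ, a, ha⟩ := exists_perm_eq_self_or_eq h
  have hle : ∀ i, u i (π i) ≤ u i (π (τ.symm i)) := by
    intro i
    obtain ⟨b, rfl⟩ := τ.surjective i
    rw [τ.symm_apply_apply]
    rcases hτ b with hb | hb <;> rw [hb]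
    exact (hh b).le
  have hlt : u (τ a) (π (τ a)) < u (τ a) (π (τ.symm (τ a))) := by
    rw [τ.symm_apply_apply, ha]
    exact hh a
  have hπ' : τ.symm.trans π ∈ T := mem_filter.2 ⟨mem_univ _, fun i => (hπ.2 i).trans (hle i)⟩
  exact (hmax _ hπ').not_gt (sum_lt_sum (fun i _ => hle i) ⟨τ a, mem_univ _, hlt⟩)

section Allocation

variable {ι α : Type*} {M P : Finset ι} {B : α → Finset ι}

structure IsPartialAllocation (M P : Finset ι) (B : α → Finset ι) : Prop where
  subset : ∀ i, B i ⊆ M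
  pool_subset : P ⊆ M
  disjoint : ∀ i j, i ≠ j → Disjoint (B i) (B j)
  disjoint_pool : ∀ i, Disjoint (B i) P
  cover : ∀ g ∈ M, (∃ i, g ∈ B i) ∨ g ∈ P

namespace IsPartialAllocation

theorem update_insert [DecidableEq ι] [DecidableEq α] (hB : IsPartialAllocation M P B) {g : ι}
    (hg : g ∈ P) (j : α) : IsPartialAllocation M (P.erase g) (update B j (insert g (B j))) := by
  have hgB : ∀ i, g ∉ B i := fun i => disjoint_right.1 (hB.disjoint_pool i) hg
  refine ⟨fun i => ?_, (erase_subset g P).trans hB.pool_subset, fun i k hik => ?_, fun i => ?_,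
    fun x hx => ?_⟩
  · rcases eq_or_ne i j with rfl | hij
    · simpa using insert_subset (hB.pool_subset hg) (hB.subset i)
    · simpa [hij] using hB.subset i
  · have := hB.disjoint i k hik
    rcases eq_or_ne i j with rfl | hij
    · simpa [hik.symm, hgB k] using this
    rcases eq_or_ne k j with rfl | hkj
    · simpa [hij, hgB i] using this
    · simpa [hij, hkj] using this
  · have := (hB.disjoint_pool i).mono_right (erase_subset g P)
    rcases eq_or_ne i j with rfl | hij
    · simpa using this
    · simpa [hij] using this
  · rcases hB.cover x hx with ⟨i, hi⟩ | hxP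
    · left
      refine ⟨i, ?_⟩
      rcases eq_or_ne i j with rfl | hij <;> simp [*]
    · rcases eq_or_ne x g with rfl | hxg
      · exact Or.inl ⟨j, by simp⟩
      · exact Or.inr (mem_erase.2 ⟨hxg, hxP⟩)

theorem comp_perm (hB : IsPartialAllocation M P B) (π : Equiv.Perm α) :
    IsPartialAllocation M P (B ∘ π) where
  subset i := hB.subset (π i)
  pool_subset := hB.pool_subset
  disjoint i j hij := hB.disjoint _ _ (π.injective.ne hij)
  disjoint_pool i := hB.disjoint_pool (π i)
  cover g hg := (hB.cover g hg).imp_left fun ⟨i, hi⟩ => ⟨π.symm i, by simpa using hi⟩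

end IsPartialAllocation

variable [DecidableEq ι] {w : α → ι → ℝ} {f : α → ι}

structure EFXInvariant (M : Finset ι) (w : α → ι → ℝ) (f : α → ι) (P : Finset ι)
    (B : α → Finset ι) : Prop extends IsPartialAllocation M P B where
  favorite_le : ∀ i, w i (f i) ≤ ∑ x ∈ B i, w i x
  eq_singleton_or_pool_le : ∀ i, B i = {f i} ∨ ∀ g ∈ P, 2 * w i g ≤ ∑ x ∈ B i, w i x
  efx : ∀ i j, i ≠ j → ∀ g ∈ B i, ∑ x ∈ (B i).erase g, w j x ≤ 3 / 2 * ∑ x ∈ B j, w j x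

namespace EFXInvariant

theorem of_injective [Fintype α] (hw : ∀ i, ∀ g ∈ M, 0 ≤ w i g) (hfM : ∀ i, f i ∈ M)
    (hf : Injective f) : EFXInvariant M w f (M \ univ.image f) fun i => {f i} where
  subset i := singleton_subset_iff.2 (hfM i)
  pool_subset := sdiff_subset
  disjoint i j hij := disjoint_singleton.2 (hf.ne hij)
  disjoint_pool i := by simp
  cover g hg := by
    by_cases hgf : g ∈ univ.image f
    · obtain ⟨i, -, rfl⟩ := mem_image.1 hgf
      exact Or.inl ⟨i, mem_singleton_self _⟩
    · exact Or.inr (mem_sdiff.2 ⟨hg, hgf⟩)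
  favorite_le i := by simp
  eq_singleton_or_pool_le i := Or.inl rfl
  efx i j _ g hg := by
    rw [mem_singleton.1 hg, erase_singleton, sum_empty, sum_singleton]
    have := hw j (f j) (hfM j)
    positivity

theorem two_thirds_efx (hw : ∀ i, ∀ g ∈ M, 0 ≤ w i g) (hI : EFXInvariant M w f P B) (i j : α) :
    ∀ g ∈ B j, 2 / 3 * ∑ x ∈ (B j).erase g, w i x ≤ ∑ x ∈ B i, w i x := by
  intro g hg
  have hnonneg : 0 ≤ ∑ x ∈ (B j).erase g, w i x :=
    sum_nonneg fun x hx => hw i x (hI.subset j (mem_of_mem_erase hx))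
  rcases eq_or_ne j i with rfl | hji
  · have := sum_erase_add _ (w j) hg
    have := hw j g (hI.subset j hg)
    linarith
  · linarith [hI.efx j i hji g hg]

theorem update_insert [DecidableEq α] (hw : ∀ i, ∀ g ∈ M, 0 ≤ w i g)
    (hI : EFXInvariant M w f P B) {g : ι} (hg : g ∈ P) (j : α)
    (hpool : ∀ g' ∈ P.erase g, 2 * w j g' ≤ w j g + ∑ x ∈ B j, w j x)
    (hefx : ∀ k ≠ j, ∀ g' ∈ insert g (B j),
      ∑ x ∈ (insert g (B j)).erase g', w k x ≤ 3 / 2 * ∑ x ∈ B k, w k x) :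
    EFXInvariant M w f (P.erase g) (update B j (insert g (B j))) := by
  have hgB : g ∉ B j := disjoint_right.1 (hI.disjoint_pool j) hg
  have hle : ∀ k, ∑ x ∈ B k, w k x ≤ ∑ x ∈ update B j (insert g (B j)) k, w k x := by
    intro k
    rcases eq_or_ne k j with rfl | hkj
    · simpa [sum_insert hgB] using hw k g (hI.pool_subset hg)
    · simp [hkj]
  refine ⟨hI.toIsPartialAllocation.update_insert hg j, fun i => (hI.favorite_le i).trans (hle i),
    fun i => ?_, fun i k hik g' hg' => ?_⟩
  · rcases eq_or_ne i j with rfl | hij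
    · rw [update_self, sum_insert hgB]
      exact Or.inr hpool
    · rw [update_of_ne hij]
      exact (hI.eq_singleton_or_pool_le i).imp_right fun h g' hg' => h g' (mem_of_mem_erase hg')
  · rcases eq_or_ne i j with rfl | hij
    · simp only [update_self, update_of_ne hik.symm] at hg' ⊢
      exact hefx k hik.symm g' hg'
    · rw [update_of_ne hij] at hg' ⊢
      exact (hI.efx i k hik g' hg').trans (mul_le_mul_of_nonneg_left (hle k) (by norm_num))

theorem comp_perm (hw : ∀ i, ∀ g ∈ M, 0 ≤ w i g) (hI : EFXInvariant M w f P B)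
    (hpool : ∀ i, ∀ g ∈ P, 2 * w i g ≤ ∑ x ∈ B i, w i x) (π : Equiv.Perm α)
    (hπ : ∀ i, ∑ x ∈ B i, w i x ≤ ∑ x ∈ B (π i), w i x) : EFXInvariant M w f P (B ∘ π) where
  toIsPartialAllocation := hI.toIsPartialAllocation.comp_perm π
  favorite_le i := (hI.favorite_le i).trans (hπ i)
  eq_singleton_or_pool_le i := Or.inr fun g hg => (hpool i g hg).trans (hπ i)
  efx i k hik g hg := by
    dsimp only [comp_apply] at hg ⊢
    rcases eq_or_ne (π i) k with hik' | hik'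
    · subst hik'
      have : ∑ x ∈ (B (π i)).erase g, w (π i) x ≤ ∑ x ∈ B (π i), w (π i) x :=
        sum_le_sum_of_subset_of_nonneg (erase_subset g _)
          fun x hx _ => hw (π i) x (hI.subset _ hx)
      linarith [hπ (π i), sum_nonneg fun x hx => hw (π i) x (hI.subset (π i) hx)]
    · linarith [hI.efx (π i) k hik' g hg, hπ k]

theorem insert_of_eq_singleton [DecidableEq α] (hw : ∀ i, ∀ g ∈ M, 0 ≤ w i g)
    (hfav : ∀ i, ∀ g ∈ M, w i g ≤ w i (f i)) (hI : EFXInvariant M w f P B) {j : α}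
    (hj : B j = {f j}) {g : ι} (hg : g ∈ P) (hmax : ∀ g' ∈ P, w j g' ≤ w j g) :
    EFXInvariant M w f (P.erase g) (update B j (insert g (B j))) := by
  have hgf : g ≠ f j := fun h => disjoint_right.1 (hI.disjoint_pool j) hg (by simp [hj, h])
  refine hI.update_insert hw hg j (fun g' hg' => ?_) fun k hkj g' hg' => ?_
  · have hg'M := hI.pool_subset (mem_of_mem_erase hg')
    rw [hj, sum_singleton]
    linarith [hmax g' (mem_of_mem_erase hg'), hfav j g' hg'M]
  · have hsingle : ∑ x ∈ (insert g (B j)).erase g', w k x ≤ w k (f k) := by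
      rw [hj] at hg' ⊢
      rcases mem_insert.1 hg' with rfl | hg'
      · rw [erase_insert (by simpa using hgf), sum_singleton]
        exact hfav k (f j) (hI.subset j (by simp [hj]))
      · rw [mem_singleton.1 hg', erase_insert_of_ne hgf, erase_singleton, insert_empty_eq,
          sum_singleton]
        exact hfav k g (hI.pool_subset hg)
    linarith [hI.favorite_le k, sum_nonneg fun x hx => hw k x (hI.subset k hx)]

theorem insert_of_unenvied [DecidableEq α] (hw : ∀ i, ∀ g ∈ M, 0 ≤ w i g)
    (hI : EFXInvariant M w f P B) (hpool : ∀ i, ∀ g ∈ P, 2 * w i g ≤ ∑ x ∈ B i, w i x) {s : α}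
    (hs : ∀ k, ∑ x ∈ B s, w k x ≤ ∑ x ∈ B k, w k x) {g : ι} (hg : g ∈ P) :
    EFXInvariant M w f (P.erase g) (update B s (insert g (B s))) := by
  have hgB : g ∉ B s := disjoint_right.1 (hI.disjoint_pool s) hg
  refine hI.update_insert hw hg s (fun g' hg' => ?_) fun k _ g' _ => ?_
  · linarith [hpool s g' (mem_of_mem_erase hg'), hw s g (hI.pool_subset hg)]
  · have : ∑ x ∈ (insert g (B s)).erase g', w k x ≤ ∑ x ∈ insert g (B s), w k x :=
      sum_le_sum_of_subset_of_nonneg (erase_subset g' _)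
        fun x hx _ => hw k x (insert_subset (hI.pool_subset hg) (hI.subset s) hx)
    rw [sum_insert hgB] at this
    linarith [hpool k g hg, hs k]

theorem exists_erase [Fintype α] [Nonempty α] [DecidableEq α] (hw : ∀ i, ∀ g ∈ M, 0 ≤ w i g)
    (hfav : ∀ i, ∀ g ∈ M, w i g ≤ w i (f i)) (hI : EFXInvariant M w f P B) (hP : P.Nonempty) :
    ∃ g ∈ P, ∃ B' : α → Finset ι, EFXInvariant M w f (P.erase g) B' := by
  by_cases hseed : ∃ j, B j = {f j}
  · obtain ⟨j, hj⟩ := hseed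
    obtain ⟨g, hg, hmax⟩ := P.exists_max_image (w j) hP
    exact ⟨g, hg, _, hI.insert_of_eq_singleton hw hfav hj hg hmax⟩
  · push Not at hseed
    have hpool i := (hI.eq_singleton_or_pool_le i).resolve_left (hseed i)
    obtain ⟨π, hπ, s, hs⟩ := exists_perm_le_and_unenvied fun i k => ∑ x ∈ B k, w i x
    obtain ⟨g, hg⟩ := hP
    exact ⟨g, hg, _, (hI.comp_perm hw hpool π hπ).insert_of_unenvied hw
      (fun i g' hg' => (hpool i g' hg').trans (hπ i)) hs hg⟩

theorem exists_empty_pool [Fintype α] [Nonempty α] [DecidableEq α]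
    (hw : ∀ i, ∀ g ∈ M, 0 ≤ w i g) (hfav : ∀ i, ∀ g ∈ M, w i g ≤ w i (f i))
    (hI : EFXInvariant M w f P B) : ∃ A : α → Finset ι, EFXInvariant M w f ∅ A := by
  induction P using Finset.strongInduction generalizing B with
  | H P ih =>
    obtain rfl | hP := P.eq_empty_or_nonempty
    · exact ⟨B, hI⟩
    · obtain ⟨g, hg, B', hI'⟩ := hI.exists_erase hw hfav hP
      exact ih _ (erase_ssubset hg) hI'

end EFXInvariant

end Allocation

/-- Distinct top items: if each agent `i` has a favorite item `f i` and these favorite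
items are pairwise distinct, then a 2/3-EFX complete allocation exists. -/
theorem twothirds_efx_distinct_top {ι : Type*} [DecidableEq ι] (n : ℕ) (hn : 1 ≤ n)
    (M : Finset ι) (w : Fin n → ι → ℝ)
    (hw : ∀ i, ∀ g ∈ M, 0 ≤ w i g)
    (f : Fin n → ι) (hfM : ∀ i, f i ∈ M) (hfinj : Function.Injective f)
    (hfav : ∀ i, ∀ g ∈ M, w i g ≤ w i (f i)) :
    ∃ A : Fin n → Finset ι,
      (∀ i, A i ⊆ M) ∧
      (∀ g ∈ M, ∃ i, g ∈ A i) ∧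
      (∀ i j, i ≠ j → Disjoint (A i) (A j)) ∧
      (∀ i j, ∀ g ∈ A j,
        (2/3 : ℝ) * ∑ x ∈ (A j).erase g, w i x ≤ ∑ x ∈ A i, w i x) := by
  have : Nonempty (Fin n) := ⟨⟨0, hn⟩⟩
  obtain ⟨A, hA⟩ := (EFXInvariant.of_injective hw hfM hfinj).exists_empty_pool hw hfav
  exact ⟨A, hA.subset, fun g hg => (hA.cover g hg).resolve_right (notMem_empty g), hA.disjoint,
    hA.two_thirds_efx hw⟩
end

section
/- Let v be a monotone, cancelable valuation on the subsets of a finite set M of items. If S, T, Q, R ⊆ M satisfy S ∩ Q = ∅, T ∩ R = ∅, v(S) ≥ v(T) and v(Q) ≥ v(R), then v(S ∪ Q) ≥ v(T ∪ R). -/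
/-- For a monotone cancelable valuation `v`: if `S ∩ Q = ∅`, `T ∩ R = ∅`, `v S ≥ v T` and
`v Q ≥ v R`, then `v (S ∪ Q) ≥ v (T ∪ R)`. -/
theorem cancelable_union_mono {ι : Type*} [DecidableEq ι] (M : Finset ι)
    (v : Finset ι → ℝ)
    (hmono : ∀ S T : Finset ι, S ⊆ T → T ⊆ M → v S ≤ v T)
    (hcanc : ∀ S T : Finset ι, S ⊆ M → T ⊆ M → ∀ g ∈ M, g ∉ S → g ∉ T →
      v (insert g S) > v (insert g T) → v S > v T)
    (S T Q R : Finset ι)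
    (hS : S ⊆ M) (hT : T ⊆ M) (hQ : Q ⊆ M) (hR : R ⊆ M)
    (hSQ : S ∩ Q = ∅) (hTR : T ∩ R = ∅)
    (h1 : v T ≤ v S) (h2 : v R ≤ v Q) :
    v (T ∪ R) ≤ v (S ∪ Q) := by
  -- Key lemma: adding a set Z disjoint from A and B preserves v A ≤ v B.
  have key : ∀ (Z A B : Finset ι), A ⊆ M → B ⊆ M → Z ⊆ M →
      (∀ g ∈ Z, g ∉ A ∧ g ∉ B) → v A ≤ v B → v (A ∪ Z) ≤ v (B ∪ Z) := by
    intro Z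
    induction Z using Finset.induction_on with
    | empty => intro A B _ _ _ _ h; simpa using h
    | @insert a Z ha ih =>
      intro A B hA hB hZM hdisj hle
      have hZM' : Z ⊆ M := (Finset.subset_insert a Z).trans hZM
      have step : v (A ∪ Z) ≤ v (B ∪ Z) :=
        ih A B hA hB hZM' (fun g hg => hdisj g (Finset.mem_insert_of_mem hg)) hle
      have haM : a ∈ M := hZM (Finset.mem_insert_self a Z)
      have haAB := hdisj a (Finset.mem_insert_self a Z)
      have haA : a ∉ A ∪ Z := by
        simp only [Finset.mem_union]
        rintro (h | h)
        · exact haAB.1 h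
        · exact ha h
      have haB : a ∉ B ∪ Z := by
        simp only [Finset.mem_union]
        rintro (h | h)
        · exact haAB.2 h
        · exact ha h
      rw [Finset.union_insert, Finset.union_insert]
      by_contra hlt
      push_neg at hlt
      exact absurd (hcanc (A ∪ Z) (B ∪ Z) (Finset.union_subset hA hZM')
        (Finset.union_subset hB hZM') a haM haA haB hlt) (not_lt.mpr step)
  have hTRd : ∀ g, g ∈ T → g ∈ R → False := by
    intro g hg1 hg2
    have : g ∈ T ∩ R := Finset.mem_inter.mpr ⟨hg1, hg2⟩
    rw [hTR] at this
    exact Finset.notMem_empty g this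
  have hSQd : ∀ g, g ∈ S → g ∈ Q → False := by
    intro g hg1 hg2
    have : g ∈ S ∩ Q := Finset.mem_inter.mpr ⟨hg1, hg2⟩
    rw [hSQ] at this
    exact Finset.notMem_empty g this
  -- Step 1: v (T ∪ (R \ S)) ≤ v (S ∪ (R \ S)) = v (S ∪ R)
  have step1 : v (T ∪ (R \ S)) ≤ v (S ∪ (R \ S)) := by
    refine key (R \ S) T S hT hS ((Finset.sdiff_subset).trans hR) ?_ h1
    intro g hg
    have hgR : g ∈ R := (Finset.mem_sdiff.mp hg).1
    have hgS : g ∉ S := (Finset.mem_sdiff.mp hg).2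
    exact ⟨fun h => hTRd g h hgR, hgS⟩
  -- Step 2: v (R ∪ (S \ R)) ≤ v (Q ∪ (S \ R))
  have step2 : v (R ∪ (S \ R)) ≤ v (Q ∪ (S \ R)) := by
    refine key (S \ R) R Q hR hQ ((Finset.sdiff_subset).trans hS) ?_ h2
    intro g hg
    have hgS : g ∈ S := (Finset.mem_sdiff.mp hg).1
    have hgR : g ∉ R := (Finset.mem_sdiff.mp hg).2
    exact ⟨hgR, fun h => hSQd g hgS h⟩
  have e1 : S ∪ (R \ S) = S ∪ R := by
    ext g; simp only [Finset.mem_union, Finset.mem_sdiff]; tauto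
  have e2 : R ∪ (S \ R) = S ∪ R := by
    ext g; simp only [Finset.mem_union, Finset.mem_sdiff]; tauto
  have mid : v (T ∪ (R \ S)) ≤ v (Q ∪ (S \ R)) := by
    calc v (T ∪ (R \ S)) ≤ v (S ∪ (R \ S)) := step1
    _ = v (R ∪ (S \ R)) := by rw [e1, e2]
    _ ≤ v (Q ∪ (S \ R)) := step2
  -- Step 3: add S ∩ R to both sides
  have step3 : v ((T ∪ (R \ S)) ∪ (S ∩ R)) ≤ v ((Q ∪ (S \ R)) ∪ (S ∩ R)) := by
    refine key (S ∩ R) (T ∪ (R \ S)) (Q ∪ (S \ R))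
      (Finset.union_subset hT ((Finset.sdiff_subset).trans hR))
      (Finset.union_subset hQ ((Finset.sdiff_subset).trans hS))
      ((Finset.inter_subset_left).trans hS) ?_ mid
    intro g hg
    have hgS : g ∈ S := (Finset.mem_inter.mp hg).1
    have hgR : g ∈ R := (Finset.mem_inter.mp hg).2
    constructor
    · simp only [Finset.mem_union, Finset.mem_sdiff]
      rintro (h | ⟨_, h⟩)
      · exact hTRd g h hgR
      · exact h hgS
    · simp only [Finset.mem_union, Finset.mem_sdiff]
      rintro (h | ⟨_, h⟩)
      · exact hSQd g hgS h
      · exact h hgR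
  have e3 : (T ∪ (R \ S)) ∪ (S ∩ R) = T ∪ R := by
    ext g
    simp only [Finset.mem_union, Finset.mem_sdiff, Finset.mem_inter]
    constructor
    · rintro ((h | ⟨h, _⟩) | ⟨_, h⟩) <;> tauto
    · rintro (h | h)
      · tauto
      · by_cases hgS : g ∈ S <;> tauto
  have e4 : (Q ∪ (S \ R)) ∪ (S ∩ R) = S ∪ Q := by
    ext g
    simp only [Finset.mem_union, Finset.mem_sdiff, Finset.mem_inter]
    constructor
    · rintro ((h | ⟨h, _⟩) | ⟨h, _⟩) <;> tauto
    · rintro (h | h)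
      · by_cases hgR : g ∈ R <;> tauto
      · tauto
  rw [e3, e4] at step3
  exact step3
end

section
/- Let v be a monotone, cancelable valuation on the subsets of a finite set M of items. If S, T, Q ⊆ M satisfy S ∩ Q = ∅ and v(S) ≥ v(T), then v(S ∪ Q) ≥ v(T ∪ Q). -/
/-- For a monotone cancelable valuation `v`: if `S ∩ Q = ∅` and `v S ≥ v T`, then
`v (S ∪ Q) ≥ v (T ∪ Q)`. -/
theorem cancelable_union_same {ι : Type*} [DecidableEq ι] (M : Finset ι)
    (v : Finset ι → ℝ)
    (hmono : ∀ S T : Finset ι, S ⊆ T → T ⊆ M → v S ≤ v T)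
    (hcanc : ∀ S T : Finset ι, S ⊆ M → T ⊆ M → ∀ g ∈ M, g ∉ S → g ∉ T →
      v (insert g S) > v (insert g T) → v S > v T)
    (S T Q : Finset ι)
    (hS : S ⊆ M) (hT : T ⊆ M) (hQ : Q ⊆ M)
    (hSQ : S ∩ Q = ∅)
    (h1 : v T ≤ v S) :
    v (T ∪ Q) ≤ v (S ∪ Q) := by
  revert hQ hSQ
  induction Q using Finset.induction_on with
  | empty => intro _ _; simpa using h1
  | @insert g Q' hgQ' ih =>
    intro hQ hSQ
    have hQ'M : Q' ⊆ M := (Finset.subset_insert g Q').trans hQ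
    have hgM : g ∈ M := hQ (Finset.mem_insert_self g Q')
    have hSQ' : S ∩ Q' = ∅ := by
      apply Finset.eq_empty_of_forall_notMem
      intro x hx
      have hx2 := Finset.eq_empty_iff_forall_notMem.mp hSQ x
      simp only [Finset.mem_inter, Finset.mem_insert] at *
      tauto
    have ih' := ih hQ'M hSQ'
    have hgS : g ∉ S := by
      intro hgs
      have := Finset.eq_empty_iff_forall_notMem.mp hSQ g
      simp [hgs] at this
    have hSU : S ∪ insert g Q' = insert g (S ∪ Q') := by
      ext x; simp [Finset.mem_insert, Finset.mem_union, or_comm, or_left_comm]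
    have hTU : T ∪ insert g Q' = insert g (T ∪ Q') := by
      ext x; simp [Finset.mem_insert, Finset.mem_union, or_comm, or_left_comm]
    rw [hSU, hTU]
    by_cases hgT : g ∈ T ∪ Q'
    · rw [Finset.insert_eq_self.mpr hgT]
      calc v (T ∪ Q') ≤ v (S ∪ Q') := ih'
        _ ≤ v (insert g (S ∪ Q')) := hmono _ _ (Finset.subset_insert _ _)
            (Finset.insert_subset hgM (Finset.union_subset hS hQ'M))
    · by_contra hlt
      push_neg at hlt
      have := hcanc (T ∪ Q') (S ∪ Q') (Finset.union_subset hT hQ'M)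
        (Finset.union_subset hS hQ'M) g hgM hgT
        (by simp [Finset.mem_union]; tauto) hlt
      linarith
end

section
/- Let n ≥ 3 agents have monotone, nonnegative, cancelable valuations (with v_i(∅) = 0) over a finite set M of items, and suppose the agents have a common tiered ranking of size at most 2: there is an ordered partition M = M_1 ∪ M_2 ∪ ... ∪ M_s into pairwise disjoint tiers with |M_j| ≤ 2 for every j, such that for every agent i, all indices k < j, every g ∈ M_k and every h ∈ M_j, v_i({g}) ≥ v_i({h}). Then there exists a complete allocation of M that is EFX. -/
/-!
Tiers are added one at a time to an EFX allocation of the items seen so far. A new item is worth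
at most any older item to every agent, so by cancelability `Q ∪ {g}` minus any item is worth at
most `Q`: a new item may go to any agent whose bundle nobody envies. Starting from a
welfare-maximal EFX allocation, envy is well founded (an envy cycle could be rotated to raise
welfare), so such an agent `p` exists. A tier `{g, h}` goes to two unenvied agents if there are
two, and entirely to `p` if nobody would envy `A p ∪ {g}` or `A p ∪ {h}`. Otherwise some `c`
envies, say, `A p ∪ {g}`; rotating bundles along an envy path from `p` to `c` lets `c` take
`A p ∪ {g}` while `p` takes a bundle that nobody else envies, and `h` is added to it.
-/

open Finset Function Relation

theorem Finite.exists_perm_rel_of_forall_exists_rel {α : Type*} [Finite α] {r : α → α → Prop}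
    {s : Set α} (hs : s.Nonempty) (h : ∀ m ∈ s, ∃ x ∈ s, r x m) :
    ∃ σ : Equiv.Perm α, (∃ i, r i (σ i)) ∧ ∀ i, σ i ≠ i → r i (σ i) := by
  classical
  choose! f hfs hfr using h
  let g : α → α := fun m => if m ∈ s then f m else m
  have hgs : Set.MapsTo g s s := fun m hm => by simp [g, hm, hfs m hm]
  have hgr : ∀ m, g m ≠ m → r (g m) m := fun m hm => by
    by_cases hms : m ∈ s
    · simpa [g, hms] using hfr m hms
    · simp [g, hms] at hm
  obtain ⟨x₀, hx₀⟩ := hs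
  obtain ⟨a, b, hab, hgab⟩ := Finite.exists_ne_map_eq_of_infinite fun k : ℕ => g^[k] x₀
  wlog hlt : a < b generalizing a b with H
  · exact H b a hab.symm hgab.symm (by omega)
  set y := g^[a] x₀
  have hper : IsPeriodicPt g (b - a) y := by
    change g^[b - a] (g^[a] x₀) = g^[a] x₀
    rw [← iterate_add_apply, Nat.sub_add_cancel hlt.le]
    exact hgab.symm
  let τ := Equiv.Perm.ofSubtype ((bijOn_ptsOfPeriod g (Nat.sub_pos_of_lt hlt)).equiv g)
  have hτ : ∀ m, τ m = if m ∈ ptsOfPeriod g (b - a) then g m else m := fun m => by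
    split_ifs with hm
    · exact Equiv.Perm.ofSubtype_apply_of_mem _ hm
    · exact Equiv.Perm.ofSubtype_apply_of_not_mem _ hm
  have hτr : ∀ m, τ m ≠ m → r (τ m) m := fun m hm => by
    rw [hτ] at hm ⊢
    split_ifs at hm ⊢
    · exact hgr m hm
    · exact absurd rfl hm
  refine ⟨τ.symm, ⟨τ y, ?_⟩, fun i hi => ?_⟩
  · have hy : y ∈ s := hgs.iterate a hx₀
    rw [Equiv.symm_apply_apply, hτ, if_pos (show y ∈ ptsOfPeriod g (b - a) from hper)]
    simpa [g, hy] using hfr y hy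
  · simpa using hτr (τ.symm i) (by simpa using hi.symm)

theorem WellFounded.exists_rotation_from_unique_min {α : Type*} [DecidableEq α]
    {r : α → α → Prop} (hr : WellFounded r) {p : α} (hpred : ∀ q ≠ p, ∃ i, r i q)
    {c : α} (hc : c ≠ p) :
    ∃ τ : Equiv.Perm α, τ p = p ∧ r p (τ c) ∧ (∀ i ≠ p, ¬ r i (τ c)) ∧
      ∀ i ≠ c, τ i ≠ i → r i (τ i) := by
  suffices H : ∀ c, c ≠ p → ∃ τ : Equiv.Perm α, τ p = p ∧ r p (τ c) ∧
      (∀ i ≠ p, ¬ r i (τ c)) ∧ (∀ i ≠ c, τ i ≠ i → r i (τ i)) ∧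
      ∀ i, τ i ≠ i → ReflTransGen r i c by
    obtain ⟨τ, h⟩ := H c hc
    exact ⟨τ, h.1, h.2.1, h.2.2.1, h.2.2.2.1⟩
  intro c
  induction c using hr.induction with
  | _ c ih =>
  intro hc
  by_cases hq : ∃ q ≠ p, r q c
  · obtain ⟨q, hqp, hqc⟩ := hq
    obtain ⟨τ, hτp, hpd, hd, hstep, hanc⟩ := ih q hqc hqp
    -- `τ` moves only points below `q`, and `c` is not one of them since `r q c`
    have hτc : τ c = c := by
      by_contra hτc
      exact hr.transGen.irrefl.irrefl c (TransGen.tail' (hanc c hτc) hqc)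
    refine ⟨τ * Equiv.swap c q, ?_, ?_, ?_, fun i hic hi => ?_, fun i hi => ?_⟩
    · simp [Equiv.swap_apply_of_ne_of_ne hc.symm hqp.symm, hτp]
    · simpa using hpd
    · simpa using hd
    · by_cases hiq : i = q
      · subst hiq
        simpa [hτc] using hqc
      · simp only [Equiv.Perm.mul_apply, Equiv.swap_apply_of_ne_of_ne hic hiq] at hi ⊢
        exact hstep i hiq hi
    · by_cases hic : i = c
      · exact hic ▸ ReflTransGen.refl
      by_cases hiq : i = q
      · exact hiq ▸ ReflTransGen.single hqc
      simp only [Equiv.Perm.mul_apply, Equiv.swap_apply_of_ne_of_ne hic hiq] at hi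
      exact (hanc i hi).tail hqc
  · push Not at hq
    obtain ⟨i, hi⟩ := hpred c hc
    obtain rfl : i = p := by_contra fun hip => hq i hip hi
    exact ⟨1, rfl, hi, hq, fun _ _ h => absurd rfl h, fun _ h => absurd rfl h⟩

namespace FairDivision

variable {ι κ : Type*} {M S : Finset ι} {A B : κ → Finset ι}

structure IsAllocation (S : Finset ι) (A : κ → Finset ι) : Prop where
  subset : ∀ i, A i ⊆ S
  cover : ∀ g ∈ S, ∃ i, g ∈ A i
  disjoint : Pairwise (Disjoint on A)

theorem IsAllocation.comp_perm (hA : IsAllocation S A) (σ : Equiv.Perm κ) :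
    IsAllocation S (A ∘ σ) where
  subset i := hA.subset (σ i)
  cover g hg := by
    obtain ⟨i, hi⟩ := hA.cover g hg
    exact ⟨σ.symm i, by simpa using hi⟩
  disjoint := hA.disjoint.comp_of_injective σ.injective

variable (v : κ → Finset ι → ℝ)

def Envies (A : κ → Finset ι) (i j : κ) : Prop :=
  v i (A i) < v i (A j)

def Unenvied (A : κ → Finset ι) (X : Finset ι) : Prop :=
  ∀ i, v i X ≤ v i (A i)

def welfare [Fintype κ] (A : κ → Finset ι) : ℝ :=
  ∑ i, v i (A i)

variable {v}

theorem Unenvied.mono {X : Finset ι} (h : Unenvied v A X) (hAB : ∀ i, v i (A i) ≤ v i (B i)) :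
    Unenvied v B X :=
  fun i => (h i).trans (hAB i)

variable (v) [DecidableEq ι]

def NotStronglyEnvied (A : κ → Finset ι) (X : Finset ι) : Prop :=
  ∀ i, ∀ x ∈ X, v i (X.erase x) ≤ v i (A i)

def IsEFX (A : κ → Finset ι) : Prop :=
  ∀ j, NotStronglyEnvied v A (A j)

def IsEFXAllocation (S : Finset ι) (A : κ → Finset ι) : Prop :=
  IsAllocation S A ∧ IsEFX v A

def IsMaxEFXAllocation [Fintype κ] (S : Finset ι) (A : κ → Finset ι) : Prop :=
  IsEFXAllocation v S A ∧ ∀ B, IsEFXAllocation v S B → welfare v B ≤ welfare v A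

def CancelableOn (M : Finset ι) (w : Finset ι → ℝ) : Prop :=
  ∀ S T, S ⊆ M → T ⊆ M → ∀ g ∈ M, g ∉ S → g ∉ T → w (insert g T) < w (insert g S) → w T < w S

variable {v}

namespace CancelableOn

variable {w : Finset ι → ℝ}

theorem insert_le_insert (hw : CancelableOn M w) {S T : Finset ι} (hS : S ⊆ M) (hT : T ⊆ M)
    {g : ι} (hg : g ∈ M) (hgS : g ∉ S) (hgT : g ∉ T) (h : w S ≤ w T) :
    w (insert g S) ≤ w (insert g T) :=
  not_lt.1 fun hlt => (hw S T hS hT g hg hgS hgT hlt).not_ge h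

theorem insert_le_insert_of_singleton_le (hw : CancelableOn M w) {x y : ι} (hx : x ∈ M)
    (hy : y ∈ M) (hxy : w {y} ≤ w {x}) {R : Finset ι} (hR : R ⊆ M) (hxR : x ∉ R)
    (hyR : y ∉ R) : w (insert y R) ≤ w (insert x R) := by
  induction R using Finset.induction_on with
  | empty => simpa using hxy
  | insert z R hzR ih =>
    rw [insert_subset_iff] at hR
    simp only [mem_insert, not_or] at hxR hyR
    rw [insert_comm y, insert_comm x]
    exact hw.insert_le_insert (insert_subset hy hR.2) (insert_subset hx hR.2) hR.1
      (by simp [Ne.symm hyR.1, hzR]) (by simp [Ne.symm hxR.1, hzR]) (ih hR.2 hxR.2 hyR.2)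

theorem erase_insert_le (hw : CancelableOn M w) {Q : Finset ι} (hQ : Q ⊆ M) {y : ι}
    (hy : y ∈ M) (hyQ : y ∉ Q) (hleast : ∀ x ∈ Q, w {y} ≤ w {x}) {x : ι}
    (hx : x ∈ insert y Q) : w ((insert y Q).erase x) ≤ w Q := by
  obtain rfl | hxQ := mem_insert.1 hx
  · rw [erase_insert hyQ]
  · rw [erase_insert_of_ne (ne_of_mem_of_not_mem hxQ hyQ).symm]
    calc w (insert y (Q.erase x)) ≤ w (insert x (Q.erase x)) :=
          hw.insert_le_insert_of_singleton_le (hQ hxQ) hy (hleast x hxQ)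
            ((erase_subset x Q).trans hQ) (notMem_erase x Q) fun h => hyQ (mem_of_mem_erase h)
      _ = w Q := by rw [insert_erase hxQ]

theorem erase_insert_insert_le (hw : CancelableOn M w) {Q : Finset ι} (hQ : Q ⊆ M) {g h : ι}
    (hg : g ∈ M) (hh : h ∈ M) (hgh : g ≠ h) (hgQ : g ∉ Q) (hhQ : h ∉ Q)
    (hleast : ∀ x ∈ Q, w {h} ≤ w {x}) {x : ι} (hx : x ∈ insert h (insert g Q)) :
    w ((insert h (insert g Q)).erase x) ≤ w (insert g Q) ∨
      w ((insert h (insert g Q)).erase x) ≤ w (insert h Q) := by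
  obtain rfl | hx := mem_insert.1 hx
  · exact Or.inl (by rw [erase_insert (by simp [hgh.symm, hhQ])])
  obtain rfl | hxQ := mem_insert.1 hx
  · exact Or.inr (by rw [insert_comm, erase_insert (by simp [hgh, hgQ])])
  · refine Or.inl ?_
    rw [insert_comm, erase_insert_of_ne (ne_of_mem_of_not_mem hxQ hgQ).symm]
    exact hw.insert_le_insert ((erase_subset _ _).trans (insert_subset hh hQ)) hQ hg
      (by simp [hgh, hgQ]) hgQ (hw.erase_insert_le hQ hh hhQ hleast (mem_insert_of_mem hxQ))

end CancelableOn

theorem IsAllocation.update_insert [DecidableEq κ] (hA : IsAllocation S A) {x : ι} (hx : x ∉ S)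
    (p : κ) :
    IsAllocation (insert x S) (update A p (insert x (A p))) where
  subset i := by
    rcases eq_or_ne i p with rfl | hip
    · simpa using insert_subset_insert x (hA.subset i)
    · simpa [hip] using (hA.subset i).trans (subset_insert x S)
  cover g hg := by
    obtain rfl | hgS := mem_insert.1 hg
    · exact ⟨p, by simp⟩
    obtain ⟨i, hi⟩ := hA.cover g hgS
    rcases eq_or_ne i p with rfl | hip
    · exact ⟨i, by simp [hi]⟩
    · exact ⟨i, by simpa [hip] using hi⟩
  disjoint i j hij := by
    have hxA : ∀ k, x ∉ A k := fun k hk => hx (hA.subset k hk)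
    have hAij : Disjoint (A i) (A j) := hA.disjoint hij
    rcases eq_or_ne i p with rfl | hip
    · simpa [onFun, hij.symm, hxA j] using hAij
    rcases eq_or_ne j p with rfl | hjp
    · simpa [onFun, hip, hxA i] using hAij
    · simpa [onFun, hip, hjp] using hAij

theorem NotStronglyEnvied.mono {X : Finset ι} (h : NotStronglyEnvied v A X)
    (hAB : ∀ i, v i (A i) ≤ v i (B i)) : NotStronglyEnvied v B X :=
  fun i x hx => (h i x hx).trans (hAB i)

theorem isEFX_of_notStronglyEnvied (hB : ∀ j, NotStronglyEnvied v A (B j))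
    (hAB : ∀ i, v i (A i) ≤ v i (B i)) : IsEFX v B :=
  fun j => (hB j).mono hAB

theorem Unenvied.notStronglyEnvied_insert (hcanc : ∀ i, CancelableOn M (v i)) {Q : Finset ι}
    (hQ : Unenvied v A Q) (hQM : Q ⊆ M) {g : ι} (hg : g ∈ M) (hgQ : g ∉ Q)
    (hleast : ∀ i, ∀ x ∈ Q, v i {g} ≤ v i {x}) : NotStronglyEnvied v A (insert g Q) :=
  fun i _ hx => ((hcanc i).erase_insert_le hQM hg hgQ (hleast i) hx).trans (hQ i)

theorem le_update_insert [DecidableEq κ] (hmono : ∀ i, MonotoneOn (v i) (Set.Iic M)) {p : κ}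
    {g : ι} (hpM : insert g (A p) ⊆ M) (i : κ) :
    v i (A i) ≤ v i (update A p (insert g (A p)) i) := by
  rcases eq_or_ne i p with rfl | hip
  · simpa using hmono i ((subset_insert g _).trans hpM) hpM (subset_insert g _)
  · simp [hip]

theorem IsEFXAllocation.update_insert [DecidableEq κ] (hmono : ∀ i, MonotoneOn (v i) (Set.Iic M))
    (hcanc : ∀ i, CancelableOn M (v i)) (hSM : S ⊆ M) (hA : IsEFXAllocation v S A) {p : κ}
    (hp : Unenvied v A (A p)) {g : ι} (hg : g ∈ M) (hgS : g ∉ S)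
    (hleast : ∀ i, ∀ x ∈ A p, v i {g} ≤ v i {x}) :
    IsEFXAllocation v (insert g S) (update A p (insert g (A p))) := by
  have hApM : A p ⊆ M := (hA.1.subset p).trans hSM
  refine ⟨hA.1.update_insert hgS p, isEFX_of_notStronglyEnvied (fun j => ?_)
    (le_update_insert hmono (insert_subset hg hApM))⟩
  rcases eq_or_ne j p with rfl | hjp
  · simpa using hp.notStronglyEnvied_insert hcanc hApM hg (fun h => hgS (hA.1.subset j h)) hleast
  · simpa [hjp] using hA.2 j

theorem IsEFXAllocation.update_insert_insert [DecidableEq κ]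
    (hmono : ∀ i, MonotoneOn (v i) (Set.Iic M)) (hcanc : ∀ i, CancelableOn M (v i)) (hSM : S ⊆ M)
    (hA : IsEFXAllocation v S A) {p : κ} {g h : ι} (hg : g ∈ M) (hh : h ∈ M) (hgh : g ≠ h)
    (hgS : g ∉ S) (hhS : h ∉ S) (hleast : ∀ i, ∀ x ∈ A p, v i {h} ≤ v i {x})
    (hcol : ∀ i ≠ p, v i (insert g (A p)) ≤ v i (A i) ∧ v i (insert h (A p)) ≤ v i (A i)) :
    IsEFXAllocation v (insert h (insert g S)) (update A p (insert h (insert g (A p)))) := by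
  have hApM : A p ⊆ M := (hA.1.subset p).trans hSM
  have hFpM : insert h (insert g (A p)) ⊆ M := insert_subset hh (insert_subset hg hApM)
  have hval : ∀ i, v i (A i) ≤ v i (update A p (insert h (insert g (A p))) i) := by
    intro i
    rcases eq_or_ne i p with rfl | hip
    · simpa using hmono i hApM hFpM ((subset_insert _ _).trans (subset_insert _ _))
    · simp [hip]
  refine ⟨?_, fun j i x hx => ?_⟩
  · simpa using (hA.1.update_insert hgS p).update_insert (by simp [hgh.symm, hhS]) p
  rcases eq_or_ne j p with rfl | hjp
  · simp only [update_self] at hx ⊢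
    rcases eq_or_ne i j with rfl | hij
    · simpa using hmono i ((erase_subset _ _).trans hFpM) hFpM (erase_subset _ _)
    rw [update_of_ne hij]
    rcases (hcanc i).erase_insert_insert_le hApM hg hh hgh (fun h' => hgS (hA.1.subset j h'))
      (fun h' => hhS (hA.1.subset j h')) (hleast i) hx with hle | hle
    · exact hle.trans (hcol i hij).1
    · exact hle.trans (hcol i hij).2
  · simp only [update_of_ne hjp] at hx ⊢
    exact (hA.2 j i x hx).trans (hval i)

theorem exists_isMaxEFXAllocation [Fintype κ] (h : ∃ A, IsEFXAllocation v S A) :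
    ∃ A, IsMaxEFXAllocation v S A := by
  have hfin : {A | IsEFXAllocation v S A}.Finite :=
    (Set.Finite.pi fun _ => S.powerset.finite_toSet).subset
      fun A hA i _ => mem_powerset.2 (hA.1.subset i)
  obtain ⟨A, hA, hmax⟩ := Set.exists_max_image _ (welfare v) hfin h
  exact ⟨A, hA, hmax⟩

namespace IsMaxEFXAllocation

variable [Fintype κ]

theorem not_lt_of_forall_le (hA : IsMaxEFXAllocation v S A) {σ : Equiv.Perm κ}
    (hσ : ∀ i, v i (A i) ≤ v i (A (σ i))) (i : κ) : ¬ v i (A i) < v i (A (σ i)) := fun hlt =>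
  (hA.2 (A ∘ σ) ⟨hA.1.1.comp_perm σ, isEFX_of_notStronglyEnvied (fun j => hA.1.2 (σ j)) hσ⟩
    ).not_gt (sum_lt_sum (fun i _ => hσ i) ⟨i, mem_univ i, hlt⟩)

theorem wellFounded_envies (hA : IsMaxEFXAllocation v S A) : WellFounded (Envies v A) := by
  refine WellFounded.wellFounded_iff_has_min.2 fun s hs => ?_
  by_contra! hcyc
  obtain ⟨σ, ⟨i, hi⟩, hσ⟩ := Finite.exists_perm_rel_of_forall_exists_rel hs hcyc
  refine hA.not_lt_of_forall_le (fun j => ?_) i hi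
  by_cases hj : σ j = j
  · rw [hj]
  · exact (hσ j hj).le

theorem exists_unenvied [Nonempty κ] (hA : IsMaxEFXAllocation v S A) :
    ∃ p, Unenvied v A (A p) := by
  obtain ⟨p, -, hp⟩ := hA.wellFounded_envies.has_min Set.univ Set.univ_nonempty
  exact ⟨p, fun i => not_lt.1 (hp i trivial)⟩

theorem exists_rotation [DecidableEq κ] (hcanc : ∀ i, CancelableOn M (v i)) (hSM : S ⊆ M)
    (hA : IsMaxEFXAllocation v S A) {p c : κ} (hp : Unenvied v A (A p))
    (henvied : ∀ q ≠ p, ∃ i, Envies v A i q) (hcp : c ≠ p) {g : ι} (hg : g ∈ M) (hgS : g ∉ S)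
    (hleast : ∀ i, ∀ x ∈ S, v i {g} ≤ v i {x}) (hc : v c (A c) < v c (insert g (A p))) :
    ∃ B, IsEFXAllocation v (insert g S) B ∧ Unenvied v B (B p) ∧ B p ⊆ S := by
  obtain ⟨τ, hτp, hpd, hd, hstep⟩ :=
    hA.wellFounded_envies.exists_rotation_from_unique_min henvied hcp
  set σ := τ * Equiv.swap c p
  have hσc : σ c = p := by simp [σ, hτp]
  have hσp : σ p = τ c := by simp [σ]
  -- `c` takes `A p ∪ {g}`, `p` takes `A (τ c)`, and every other agent `i` takes `A (τ i)`
  set B := update (A ∘ σ) c (insert g (A p))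
  have hBp : B p = A (τ c) := by simp [B, hcp.symm, hσp]
  have hval : ∀ i, v i (A i) ≤ v i (B i) := by
    intro i
    rcases eq_or_ne i c with rfl | hic
    · simpa [B] using hc.le
    rcases eq_or_ne i p with rfl | hip
    · exact hBp ▸ hpd.le
    simp only [B, update_of_ne hic, comp_apply, σ, Equiv.Perm.mul_apply,
      Equiv.swap_apply_of_ne_of_ne hic hip]
    by_cases hτi : τ i = i
    · rw [hτi]
    · exact (hstep i hic hτi).le
  have hApM : A p ⊆ M := (hA.1.1.subset p).trans hSM
  refine ⟨B, ⟨?_, isEFX_of_notStronglyEnvied (fun j => ?_) hval⟩, fun i => ?_,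
    hBp ▸ hA.1.1.subset _⟩
  · simpa [B, hσc] using (hA.1.1.comp_perm σ).update_insert hgS c
  · rcases eq_or_ne j c with rfl | hjc
    · simpa [B] using hp.notStronglyEnvied_insert hcanc hApM hg
        (fun h => hgS (hA.1.1.subset p h)) fun i x hx => hleast i x (hA.1.1.subset p hx)
    · simpa [B, hjc] using hA.1.2 (σ j)
  · rcases eq_or_ne i p with rfl | hip
    · exact le_rfl
    · rw [hBp]
      exact (not_lt.1 (hd i hip)).trans (hval i)

theorem exists_insert_insert [DecidableEq κ] [Nonempty κ]
    (hmono : ∀ i, MonotoneOn (v i) (Set.Iic M)) (hcanc : ∀ i, CancelableOn M (v i)) (hSM : S ⊆ M)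
    (hA : IsMaxEFXAllocation v S A) {g h : ι} (hg : g ∈ M) (hh : h ∈ M) (hgh : g ≠ h)
    (hgS : g ∉ S) (hhS : h ∉ S) (hgleast : ∀ i, ∀ x ∈ S, v i {g} ≤ v i {x})
    (hhleast : ∀ i, ∀ x ∈ S, v i {h} ≤ v i {x}) :
    ∃ F, IsEFXAllocation v (insert h (insert g S)) F := by
  obtain ⟨p, hp⟩ := hA.exists_unenvied
  have hApS : A p ⊆ S := hA.1.1.subset p
  have hhgS : h ∉ insert g S := by simp [hgh.symm, hhS]
  have hghS : g ∉ insert h S := by simp [hgh, hgS]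
  by_cases htwo : ∃ q ≠ p, Unenvied v A (A q)
  · obtain ⟨q, hqp, hq⟩ := htwo
    have hB := hA.1.update_insert hmono hcanc hSM hp hg hgS fun i x hx => hgleast i x (hApS hx)
    have hqB : Unenvied v (update A p (insert g (A p))) (update A p (insert g (A p)) q) := by
      simpa [hqp] using hq.mono (le_update_insert hmono (insert_subset hg (hApS.trans hSM)))
    exact ⟨_, hB.update_insert hmono hcanc (insert_subset hg hSM) hqB hh hhgS
      fun i x hx => hhleast i x (hA.1.1.subset q (by simpa [hqp] using hx))⟩
  push Not at htwo
  have henvied : ∀ q ≠ p, ∃ i, Envies v A i q := fun q hq => by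
    simpa [Unenvied, Envies] using htwo q hq
  by_cases hcol : ∀ i ≠ p, v i (insert g (A p)) ≤ v i (A i) ∧ v i (insert h (A p)) ≤ v i (A i)
  · exact ⟨_, hA.1.update_insert_insert hmono hcanc hSM hg hh hgh hgS hhS
      (fun i x hx => hhleast i x (hApS hx)) hcol⟩
  push Not at hcol
  obtain ⟨c, hcp, hc⟩ := hcol
  by_cases hcg : v c (A c) < v c (insert g (A p))
  · obtain ⟨B, hB, hpB, hBS⟩ := hA.exists_rotation hcanc hSM hp henvied hcp hg hgS hgleast hcg
    exact ⟨_, hB.update_insert hmono hcanc (insert_subset hg hSM) hpB hh hhgS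
      fun i x hx => hhleast i x (hBS hx)⟩
  · obtain ⟨B, hB, hpB, hBS⟩ :=
      hA.exists_rotation hcanc hSM hp henvied hcp hh hhS hhleast (hc (not_lt.1 hcg))
    rw [insert_comm]
    exact ⟨_, hB.update_insert hmono hcanc (insert_subset hh hSM) hpB hg hghS
      fun i x hx => hgleast i x (hBS hx)⟩

end IsMaxEFXAllocation

theorem exists_isEFXAllocation_union [Fintype κ] [DecidableEq κ] [Nonempty κ]
    (hmono : ∀ i, MonotoneOn (v i) (Set.Iic M)) (hcanc : ∀ i, CancelableOn M (v i))
    {T : Finset ι} (hSM : S ⊆ M) (hTM : T ⊆ M) (hST : Disjoint S T) (hT : T.card ≤ 2)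
    (hleast : ∀ i, ∀ y ∈ T, ∀ x ∈ S, v i {y} ≤ v i {x}) (hS : ∃ A, IsEFXAllocation v S A) :
    ∃ A, IsEFXAllocation v (S ∪ T) A := by
  obtain ⟨A, hA⟩ := exists_isMaxEFXAllocation hS
  interval_cases hc : T.card
  · rwa [card_eq_zero.1 hc, union_empty]
  · obtain ⟨g, rfl⟩ := card_eq_one.1 hc
    obtain ⟨p, hp⟩ := hA.exists_unenvied
    rw [union_singleton]
    exact ⟨_, hA.1.update_insert hmono hcanc hSM hp (hTM (mem_singleton_self g))
      (disjoint_singleton_right.1 hST)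
      fun i x hx => hleast i g (mem_singleton_self g) x (hA.1.1.subset p hx)⟩
  · obtain ⟨g, h, hgh, rfl⟩ := card_eq_two.1 hc
    rw [show S ∪ {g, h} = insert h (insert g S) by ext; simp; tauto]
    rw [disjoint_insert_right, disjoint_singleton_right] at hST
    exact hA.exists_insert_insert hmono hcanc hSM (hTM (by simp)) (hTM (by simp)) hgh hST.1 hST.2
      (hleast · g (by simp)) (hleast · h (by simp))

theorem exists_isEFXAllocation_biUnion [Fintype κ] [DecidableEq κ] [Nonempty κ]
    (hmono : ∀ i, MonotoneOn (v i) (Set.Iic M)) (hcanc : ∀ i, CancelableOn M (v i)) :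
    ∀ {s : ℕ} (Mt : Fin s → Finset ι), (∀ j, Mt j ⊆ M) → Pairwise (Disjoint on Mt) →
      (∀ j, (Mt j).card ≤ 2) →
      (∀ i, ∀ j k : Fin s, j < k → ∀ g ∈ Mt j, ∀ h ∈ Mt k, v i {h} ≤ v i {g}) →
      ∃ A, IsEFXAllocation v (univ.biUnion Mt) A
  | 0, Mt, _, _, _, _ =>
    ⟨fun _ => ∅, ⟨by simp, by simp, by simp [Pairwise]⟩, by simp [IsEFX, NotStronglyEnvied]⟩
  | s + 1, Mt, htsub, htdisj, htsize, horder => by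
    have hsplit : univ.biUnion Mt = univ.biUnion (Mt ∘ Fin.castSucc) ∪ Mt (Fin.last s) := by
      ext x; simp [Fin.exists_fin_succ']
    rw [hsplit]
    refine exists_isEFXAllocation_union hmono hcanc ?_ (htsub _) ?_ (htsize _) ?_
      (exists_isEFXAllocation_biUnion hmono hcanc (Mt ∘ Fin.castSucc) (fun _ => htsub _)
        (htdisj.comp_of_injective (Fin.castSucc_injective s)) (fun _ => htsize _)
        fun i j k hjk => horder i _ _ (Fin.castSucc_lt_castSucc_iff.2 hjk))
    · exact biUnion_subset.2 fun j _ => htsub _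
    · exact (disjoint_biUnion_left _ _ _).2 fun j _ => htdisj (Fin.castSucc_lt_last j).ne
    · intro i y hy x hx
      obtain ⟨j, -, hxj⟩ := mem_biUnion.1 hx
      exact horder i _ _ (Fin.castSucc_lt_last j) x hxj y hy

end FairDivision

theorem efx_exists_tiers_of_size_two_general {ι : Type*} [DecidableEq ι] (n : ℕ) (hn : 3 ≤ n)
    (M : Finset ι) (v : Fin n → Finset ι → ℝ)
    (hmono : ∀ i, ∀ S T : Finset ι, S ⊆ T → T ⊆ M → v i S ≤ v i T)
    (hcanc : ∀ i, ∀ S T : Finset ι, S ⊆ M → T ⊆ M → ∀ g ∈ M, g ∉ S → g ∉ T →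
      v i (insert g S) > v i (insert g T) → v i S > v i T)
    (s : ℕ) (Mt : Fin s → Finset ι)
    (htsub : ∀ j, Mt j ⊆ M)
    (htcover : ∀ g ∈ M, ∃ j, g ∈ Mt j)
    (htdisj : ∀ j k, j ≠ k → Disjoint (Mt j) (Mt k))
    (htsize : ∀ j, (Mt j).card ≤ 2)
    (horder : ∀ i, ∀ j k : Fin s, j < k → ∀ g ∈ Mt j, ∀ h ∈ Mt k, v i {h} ≤ v i {g}) :
    ∃ A : Fin n → Finset ι,
      (∀ i, A i ⊆ M) ∧
      (∀ g ∈ M, ∃ i, g ∈ A i) ∧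
      (∀ i j, i ≠ j → Disjoint (A i) (A j)) ∧
      (∀ i j, ∀ g ∈ A j, v i ((A j).erase g) ≤ v i (A i)) := by
  have : Nonempty (Fin n) := ⟨⟨0, by omega⟩⟩
  have hM : univ.biUnion Mt = M :=
    Subset.antisymm (biUnion_subset.2 fun j _ => htsub j)
      fun g hg => mem_biUnion.2 <| (htcover g hg).imp fun j hj => ⟨mem_univ j, hj⟩
  obtain ⟨A, hA, hefx⟩ := FairDivision.exists_isEFXAllocation_biUnion (v := v)
    (fun i _ _ T hT hST => hmono i _ T hST hT) hcanc Mt htsub (fun j k => htdisj j k) htsize horder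
  rw [hM] at hA
  exact ⟨A, hA.subset, hA.cover, fun i j hij => hA.disjoint hij, fun i j => hefx j i⟩

/-- If `n ≥ 3` agents have monotone, nonnegative, cancelable valuations and share a common
tiered ranking of the items with tiers of size at most 2, then an EFX complete allocation
exists. -/
theorem efx_exists_tiers_of_size_two {ι : Type*} [DecidableEq ι] (n : ℕ) (hn : 3 ≤ n)
    (M : Finset ι) (v : Fin n → Finset ι → ℝ)
    (hmono : ∀ i, ∀ S T : Finset ι, S ⊆ T → T ⊆ M → v i S ≤ v i T)
    (hnonneg : ∀ i, ∀ S : Finset ι, S ⊆ M → 0 ≤ v i S)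
    (hempty : ∀ i, v i ∅ = 0)
    (hcanc : ∀ i, ∀ S T : Finset ι, S ⊆ M → T ⊆ M → ∀ g ∈ M, g ∉ S → g ∉ T →
      v i (insert g S) > v i (insert g T) → v i S > v i T)
    (s : ℕ) (Mt : Fin s → Finset ι)
    (htsub : ∀ j, Mt j ⊆ M)
    (htcover : ∀ g ∈ M, ∃ j, g ∈ Mt j)
    (htdisj : ∀ j k, j ≠ k → Disjoint (Mt j) (Mt k))
    (htsize : ∀ j, (Mt j).card ≤ 2)
    (horder : ∀ i, ∀ j k : Fin s, j < k → ∀ g ∈ Mt j, ∀ h ∈ Mt k, v i {h} ≤ v i {g}) :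
    ∃ A : Fin n → Finset ι,
      (∀ i, A i ⊆ M) ∧
      (∀ g ∈ M, ∃ i, g ∈ A i) ∧
      (∀ i j, i ≠ j → Disjoint (A i) (A j)) ∧
      (∀ i j, ∀ g ∈ A j, v i ((A j).erase g) ≤ v i (A i)) :=
  efx_exists_tiers_of_size_two_general n hn M v hmono hcanc s Mt htsub htcover htdisj htsize horder
end

section
/- Let n agents have monotone, nonnegative valuations (with v_i(∅) = 0) over a finite set M of m items, let k = ⌊m/n⌋, and suppose there exist pairwise disjoint sets T_1,...,T_n ⊆ M with |T_i| = k for every i, such that for every agent i and every set S ⊆ M with |S| ≤ k it holds that v_i(T_i) ≥ v_i(S) (each agent i has a distinct favorite tier T_i of size ⌊m/n⌋). Then there exists a complete allocation A of M with T_i ⊆ A_i for every i that is EFX. -/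
/-- Distinct top tiers: if each agent `i` has a distinct favorite tier `T i` of size
`⌊m/n⌋` (a set she weakly prefers to every set of at most `⌊m/n⌋` items), the tiers being
pairwise disjoint, then an EFX complete allocation extending the tiers exists. -/
theorem efx_exists_distinct_top_tiers {ι : Type*} [DecidableEq ι] (n : ℕ) (hn : 1 ≤ n)
    (M : Finset ι) (v : Fin n → Finset ι → ℝ)
    (hmono : ∀ i, ∀ S T : Finset ι, S ⊆ T → T ⊆ M → v i S ≤ v i T)
    (hnonneg : ∀ i, ∀ S : Finset ι, S ⊆ M → 0 ≤ v i S)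
    (hempty : ∀ i, v i ∅ = 0)
    (T : Fin n → Finset ι)
    (hTsub : ∀ i, T i ⊆ M)
    (hTdisj : ∀ i j, i ≠ j → Disjoint (T i) (T j))
    (hTcard : ∀ i, (T i).card = M.card / n)
    (hfav : ∀ i, ∀ S : Finset ι, S ⊆ M → S.card ≤ M.card / n → v i S ≤ v i (T i)) :
    ∃ A : Fin n → Finset ι,
      (∀ i, A i ⊆ M) ∧
      (∀ g ∈ M, ∃ i, g ∈ A i) ∧
      (∀ i j, i ≠ j → Disjoint (A i) (A j)) ∧
      (∀ i, T i ⊆ A i) ∧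
      (∀ i j, ∀ g ∈ A j, v i ((A j).erase g) ≤ v i (A i)) := by
  classical
  set k := M.card / n with hk
  set B : Finset ι := Finset.univ.biUnion T with hB
  set R : Finset ι := M \ B with hRdef
  have hBsub : B ⊆ M := Finset.biUnion_subset.mpr (fun i _ => hTsub i)
  have hBcard : B.card = n * k := by
    rw [hB, Finset.card_biUnion (fun i _ j _ hij => hTdisj i j hij)]
    simp [hTcard, mul_comm]
  have hRcard : R.card < n := by
    have h1 : R.card = M.card - n * k := by
      rw [hRdef, Finset.card_sdiff_of_subset hBsub, hBcard]
    rw [hk] at h1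
    have h2 := Nat.mod_add_div M.card n
    have h3 : M.card % n < n := Nat.mod_lt _ (by omega)
    omega
  have hle : R.card ≤ n := hRcard.le
  let e := R.equivFin
  let f : ι → Fin n := fun x => if h : x ∈ R then Fin.castLE hle (e ⟨x, h⟩) else ⟨0, hn⟩
  have hfInj : ∀ x ∈ R, ∀ y ∈ R, f x = f y → x = y := by
    intro x hx y hy hxy
    simp only [f, dif_pos hx, dif_pos hy] at hxy
    have h1 : e ⟨x, hx⟩ = e ⟨y, hy⟩ := Fin.castLE_injective hle hxy
    exact Subtype.mk_eq_mk.mp (e.injective h1)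
  set A : Fin n → Finset ι := fun i => T i ∪ R.filter (fun x => f x = i) with hA
  have hRsubM : R ⊆ M := Finset.sdiff_subset
  have hAsub : ∀ i, A i ⊆ M := fun i =>
    Finset.union_subset (hTsub i) ((Finset.filter_subset _ _).trans hRsubM)
  have hfiltcard : ∀ i, (R.filter (fun x => f x = i)).card ≤ 1 := by
    intro i
    apply Finset.card_le_one.mpr
    intro a ha b hb
    simp only [Finset.mem_filter] at ha hb
    exact hfInj a ha.1 b hb.1 (ha.2.trans hb.2.symm)
  have hAcard : ∀ i, (A i).card ≤ k + 1 := by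
    intro i
    calc (A i).card ≤ (T i).card + (R.filter (fun x => f x = i)).card :=
          Finset.card_union_le _ _
      _ ≤ k + 1 := by have := hfiltcard i; rw [hTcard i, hk]; omega
  refine ⟨A, hAsub, ?_, ?_, fun i => Finset.subset_union_left, ?_⟩
  · intro g hg
    by_cases h : g ∈ B
    · rw [hB] at h
      simp only [Finset.mem_biUnion] at h
      obtain ⟨i, _, hi⟩ := h
      exact ⟨i, Finset.mem_union_left _ hi⟩
    · have hgR : g ∈ R := Finset.mem_sdiff.mpr ⟨hg, h⟩
      exact ⟨f g, Finset.mem_union_right _ (Finset.mem_filter.mpr ⟨hgR, rfl⟩)⟩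
  · intro i j hij
    rw [Finset.disjoint_left]
    intro a hai haj
    rcases Finset.mem_union.mp hai with h1 | h1 <;>
      rcases Finset.mem_union.mp haj with h2 | h2
    · exact (Finset.disjoint_left.mp (hTdisj i j hij) h1) h2
    · have hab : a ∈ B := Finset.mem_biUnion.mpr ⟨i, Finset.mem_univ _, h1⟩
      exact (Finset.mem_sdiff.mp (Finset.mem_filter.mp h2).1).2 hab
    · have hab : a ∈ B := Finset.mem_biUnion.mpr ⟨j, Finset.mem_univ _, h2⟩
      exact (Finset.mem_sdiff.mp (Finset.mem_filter.mp h1).1).2 hab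
    · exact hij ((Finset.mem_filter.mp h1).2.symm.trans (Finset.mem_filter.mp h2).2)
  · intro i j g hg
    have hsub : (A j).erase g ⊆ M := (Finset.erase_subset _ _).trans (hAsub j)
    have hcard : ((A j).erase g).card ≤ k := by
      rw [Finset.card_erase_of_mem hg]
      exact Nat.sub_le_of_le_add (hAcard j)
    calc v i ((A j).erase g) ≤ v i (T i) := hfav i _ hsub hcard
      _ ≤ v i (A i) := hmono i _ _ Finset.subset_union_left (hAsub i)
end

section
/- Let n agents have additive valuations over a finite set M of items, let L ⊆ M with |L| = ℓ be such that for every agent i, every g ∈ L and every h ∈ M \ L, v_i({g}) ≥ v_i({h}), and let S = (S_1,...,S_n) be any partial allocation that allocates exactly the items of L (the union of the bundles equals L) and is EFX. Then, with k = ⌊ℓ/n⌋, for every agent i and every item h ∈ M \ L it holds that v_i(S_i) ≥ k·v_i({h}). -/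
/-- If all agents agree that the items of `L` (with `|L| = ℓ`) are the top `ℓ` items, and
`S` is any EFX partial allocation allocating exactly the items of `L`, then with
`k = ⌊ℓ/n⌋`, every agent values her bundle at least `k` times any item outside `L`. -/
theorem efx_partial_top_set_value_bound {ι : Type*} [DecidableEq ι] (n : ℕ)
    (M : Finset ι) (w : Fin n → ι → ℝ)
    (hw : ∀ i, ∀ g ∈ M, 0 ≤ w i g)
    (ℓ : ℕ) (L : Finset ι) (hLM : L ⊆ M) (hLcard : L.card = ℓ)
    (htop : ∀ i, ∀ g ∈ L, ∀ h ∈ M \ L, w i h ≤ w i g)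
    (S : Fin n → Finset ι)
    (hSsub : ∀ i, S i ⊆ L)
    (hScover : ∀ g ∈ L, ∃ i, g ∈ S i)
    (hSdisj : ∀ i j, i ≠ j → Disjoint (S i) (S j))
    (hSefx : ∀ i j, ∀ g ∈ S j, ∑ x ∈ (S j).erase g, w i x ≤ ∑ x ∈ S i, w i x) :
    ∀ i, ∀ h ∈ M \ L, ((ℓ / n : ℕ) : ℝ) * w i h ≤ ∑ x ∈ S i, w i x := by
  intro i h hh
  set k := ℓ / n with hk
  obtain ⟨hhM, hhL⟩ := Finset.mem_sdiff.mp hh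
  have hwh : 0 ≤ w i h := hw i h hhM
  -- key: for any T ⊆ L, card T * w i h ≤ ∑ x in T, w i x
  have key : ∀ T : Finset ι, T ⊆ L → ((T.card : ℝ)) * w i h ≤ ∑ x ∈ T, w i x := by
    intro T hT
    calc ((T.card : ℝ)) * w i h = ∑ _x ∈ T, w i h := by
          rw [Finset.sum_const, nsmul_eq_mul]
      _ ≤ ∑ x ∈ T, w i x := by
          apply Finset.sum_le_sum
          intro x hx
          exact htop i x (hT hx) h (Finset.mem_sdiff.mpr ⟨hhM, hhL⟩)
  by_cases hc : k ≤ (S i).card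
  · refine le_trans ?_ (key (S i) (hSsub i))
    exact mul_le_mul_of_nonneg_right (by exact_mod_cast hc) hwh
  · push_neg at hc
    -- sum of cards = ℓ
    have hLeq : L = Finset.univ.biUnion S := by
      apply Finset.Subset.antisymm
      · intro g hg
        obtain ⟨j, hj⟩ := hScover g hg
        exact Finset.mem_biUnion.mpr ⟨j, Finset.mem_univ j, hj⟩
      · intro g hg
        obtain ⟨j, _, hj⟩ := Finset.mem_biUnion.mp hg
        exact hSsub j hj
    have hsum : ∑ j, (S j).card = ℓ := by
      rw [← hLcard, hLeq, Finset.card_biUnion]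
      intro a _ b _ hab
      exact hSdisj a b hab
    -- pigeonhole: some j has card ≥ k+1
    have hex : ∃ j, k + 1 ≤ (S j).card := by
      by_contra hall
      push_neg at hall
      have hlt : ∑ j, (S j).card < ∑ _j : Fin n, k := by
        apply Finset.sum_lt_sum
        · intro j _
          exact Nat.lt_succ_iff.mp (hall j)
        · exact ⟨i, Finset.mem_univ i, hc⟩
      rw [hsum, Finset.sum_const, Finset.card_univ, Fintype.card_fin, smul_eq_mul] at hlt
      have hle : n * k ≤ ℓ := by rw [hk, mul_comm]; exact Nat.div_mul_le_self ℓ n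
      omega
    obtain ⟨j, hj⟩ := hex
    have hjne : (S j).Nonempty := Finset.card_pos.mp (by omega)
    obtain ⟨g, hg⟩ := hjne
    have herase : k ≤ ((S j).erase g).card := by
      rw [Finset.card_erase_of_mem hg]; omega
    refine le_trans ?_ (hSefx i j g hg)
    refine le_trans ?_ (key _ ((Finset.erase_subset g (S j)).trans (hSsub j)))
    exact mul_le_mul_of_nonneg_right (by exact_mod_cast herase) hwh
end
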